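/- arXiv:1506.07449 — 9 statements merged into one kernel-verified Lean document; each statement's English description precedes it below -/
import Mathlib

section
/- For σ = (1,3,5,7,...) (i.e., s_k = 2k+1) and τ = (1,4,9,16,...) (i.e., t_k = k²), the n-th leading principal minor of the tridiagonal matrix J^{σ,τ} equals (n+1)!. -/
/-- The infinite tridiagonal (Jacobi) matrix `J^{σ,τ}`. -/
def jacobiMatrix (s t : ℕ → ℝ) : ℕ → ℕ → ℝ := fun i j =>
  if i = j then s i else if j = i + 1 then 1 else if i = j + 1 then t i else 0


noncomputable def Dj (s t : ℕ → ℝ) (n : ℕ) : ℝ :=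
  Matrix.det (Matrix.of fun i j : Fin (n + 1) => jacobiMatrix s t i j)

lemma Dj_zero (s t : ℕ → ℝ) : Dj s t 0 = s 0 := by
  simp [Dj, jacobiMatrix]

lemma Dj_one (s t : ℕ → ℝ) : Dj s t 1 = s 0 * s 1 - t 1 := by
  rw [Dj, Matrix.det_fin_two]
  simp [jacobiMatrix]

lemma Dj_rec (s t : ℕ → ℝ) (n : ℕ) :
    Dj s t (n + 2) = s (n + 2) * Dj s t (n + 1) - t (n + 2) * Dj s t n := by
  set A : Matrix (Fin (n + 3)) (Fin (n + 3)) ℝ :=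
    Matrix.of fun i j : Fin (n + 3) => jacobiMatrix s t i j with hA
  have hdet : Dj s t (n + 2) = A.det := rfl
  rw [hdet, Matrix.det_succ_row A (Fin.last (n + 2))]
  set F : Fin (n + 3) → ℝ := fun j =>
    (-1 : ℝ) ^ ((Fin.last (n + 2) : ℕ) + (j : ℕ)) * A (Fin.last (n + 2)) j *
      Matrix.det (A.submatrix (Fin.last (n + 2)).succAbove j.succAbove) with hF
  set a : Fin (n + 3) := ⟨n + 1, by omega⟩ with ha
  set b : Fin (n + 3) := Fin.last (n + 2) with hb
  have hab : a ≠ b := by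
    simp [ha, hb, Fin.ext_iff]
  have hsplit : ∀ j : Fin (n + 3),
      F j = (if j = a then F a else 0) + (if j = b then F b else 0) := by
    intro j
    by_cases hja : j = a
    · simp [hja, hab]
    · by_cases hjb : j = b
      · simp [hja, hjb, hab, Ne.symm hab]
      · have hjv1 : (j : ℕ) ≠ n + 1 := fun h => hja (Fin.ext h)
        have hjv2 : (j : ℕ) ≠ n + 2 := fun h => hjb (Fin.ext (by simpa [hb] using h))
        have : A (Fin.last (n + 2)) j = 0 := by
          simp only [hA, Matrix.of_apply, jacobiMatrix, Fin.val_last]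
          rw [if_neg (by omega), if_neg (by omega), if_neg (by omega)]
        rw [← hb] at this
        simp [hja, hjb, hF, this]
  rw [Finset.sum_congr rfl (fun j _ => hsplit j)]
  rw [Finset.sum_add_distrib, Finset.sum_ite_eq' Finset.univ a, Finset.sum_ite_eq' Finset.univ b]
  simp only [Finset.mem_univ, if_true]
  -- compute F b
  have hFb : F b = s (n + 2) * Dj s t (n + 1) := by
    have h1 : A b b = s (n + 2) := by
      simp [hA, hb, jacobiMatrix]
    have h2 : (A.submatrix (Fin.last (n + 2)).succAbove b.succAbove) =
        Matrix.of fun i j : Fin (n + 2) => jacobiMatrix s t i j := by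
      ext i j
      simp only [hb, Fin.succAbove_last, hA, Matrix.submatrix_apply, Matrix.of_apply]
      rfl
    have h3 : (-1 : ℝ) ^ ((Fin.last (n + 2) : ℕ) + (b : ℕ)) = 1 := by
      simp [hb]
    simp only [← hb] at h2 h3
    rw [hF]
    simp only [h1, h2, h3]
    rw [Dj]
    ring
  -- compute F a
  have hFa : F a = - (t (n + 2) * Dj s t n) := by
    have h1 : A b a = t (n + 2) := by
      simp only [hA, hb, ha, Matrix.of_apply, jacobiMatrix, Fin.val_last]
      rw [if_neg (by omega), if_neg (by omega)]
      simp
    have h3 : (-1 : ℝ) ^ ((Fin.last (n + 2) : ℕ) + (a : ℕ)) = -1 := by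
      simp only [hb, ha, Fin.val_last]
      rw [show (n + 2) + (n + 1) = 2 * (n + 1) + 1 by ring]
      simp [pow_succ, pow_mul]
    -- the cofactor
    set B : Matrix (Fin (n + 2)) (Fin (n + 2)) ℝ :=
      A.submatrix (Fin.last (n + 2)).succAbove a.succAbove with hB
    have hBlast : ∀ i : Fin (n + 2), B i (Fin.last (n + 1)) =
        if (i : ℕ) = n + 1 then 1 else 0 := by
      intro i
      have hsa : a.succAbove (Fin.last (n + 1)) = Fin.last (n + 2) := by
        rw [Fin.succAbove]
        rw [if_neg (by simp [ha, Fin.lt_iff_val_lt_val])]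
        rfl
      rw [hB]
      simp only [Matrix.submatrix_apply, Fin.succAbove_last, hsa, hA, Matrix.of_apply,
        jacobiMatrix, Fin.coe_castSucc, Fin.val_last]
      by_cases h : (i : ℕ) = n + 1
      · rw [if_neg (by omega), if_pos (by omega), if_pos h]
      · rw [if_neg (by omega), if_neg (by omega), if_neg (by omega), if_neg h]
    have hBdet : B.det = Dj s t n := by
      rw [Matrix.det_succ_column B (Fin.last (n + 1))]
      have hterm : ∀ i : Fin (n + 2),
          (-1 : ℝ) ^ ((i : ℕ) + ((Fin.last (n + 1) : ℕ))) * B i (Fin.last (n + 1)) *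
            Matrix.det (B.submatrix i.succAbove (Fin.last (n + 1)).succAbove) =
          if i = Fin.last (n + 1) then Dj s t n else 0 := by
        intro i
        by_cases h : i = Fin.last (n + 1)
        · rw [if_pos h, h, hBlast]
          rw [if_pos (by simp)]
          have hsign : (-1 : ℝ) ^ (((Fin.last (n + 1) : ℕ)) + ((Fin.last (n + 1) : ℕ))) = 1 := by
            simp only [Fin.val_last]
            rw [show (n + 1) + (n + 1) = 2 * (n + 1) by ring]
            simp [pow_mul]
          rw [hsign]
          have hsub : B.submatrix (Fin.last (n + 1)).succAbove (Fin.last (n + 1)).succAbove =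
              Matrix.of fun i j : Fin (n + 1) => jacobiMatrix s t i j := by
            ext i j
            simp only [Fin.succAbove_last, hB, Matrix.submatrix_apply, Fin.succAbove_last]
            have hsa : a.succAbove (Fin.castSucc j) = Fin.castSucc (Fin.castSucc j) := by
              rw [Fin.succAbove]
              rw [if_pos (by simp [ha, Fin.lt_iff_val_lt_val]; have := j.isLt; omega)]
            rw [hsa]
            rfl
          rw [hsub, Dj]
          ring
        · rw [if_neg h, hBlast]
          rw [if_neg (fun hv => h (Fin.ext (by simpa using hv)))]
          ring
      rw [Finset.sum_congr rfl (fun i _ => hterm i)]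
      simp
    simp only [← hb] at hB h3
    rw [hF]
    simp only [← hb, ← hB, h1, h3, hBdet]
    ring
  rw [hFa, hFb]
  ring

theorem stmt_2 (n : ℕ) :
    Matrix.det (Matrix.of fun i j : Fin (n + 1) =>
      jacobiMatrix (fun k => 2 * k + 1) (fun k => (k : ℝ) ^ 2) i j)
      = (Nat.factorial (n + 1) : ℝ) := by
  have key : ∀ m : ℕ, Dj (fun k => 2 * k + 1) (fun k => (k : ℝ) ^ 2) m
      = (Nat.factorial (m + 1) : ℝ) := by
    intro m
    induction m using Nat.twoStepInduction with
    | zero => simp [Dj_zero, Nat.factorial]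
    | one =>
      rw [Dj_one]
      norm_num [Nat.factorial]
    | more k ih1 ih2 =>
      rw [Dj_rec, ih1, ih2]
      have h1 : Nat.factorial (k + 3) = (k + 3) * Nat.factorial (k + 2) := rfl
      have h2 : Nat.factorial (k + 2) = (k + 2) * Nat.factorial (k + 1) := rfl
      rw [h1, h2]
      push_cast
      ring
  exact key n
end

section
/- The Bell numbers satisfy Dobinski's formula: B_n = (1/e) ∑_{k≥0} kⁿ/k! for all n ≥ 0; consequently the Bell numbers form a Stieltjes moment sequence, being the moments of the Poisson distribution with parameter 1. -/
set_option linter.unusedSectionVars false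

open Finset

/-- The `n`-th Bell number: the number of partitions of an `n`-element set,
i.e. the number of equivalence relations (setoids) on `Fin n`. -/
noncomputable def bellNumber (n : ℕ) : ℕ := Nat.card (Setoid (Fin n))

instance setoidFinite (α : Type*) [Finite α] : Finite (Setoid α) :=
  Finite.of_injective (fun s : Setoid α => (s : α → α → Prop))
    (fun s t h => by cases s; cases t; simp only at h; subst h; rfl)

/-- lift a setoid to `Option`, with `none` its own class. -/
def optionSetoid {γ : Type*} (t : Setoid γ) : Setoid (Option γ) where
  r x y := match x, y with
    | none, none => True
    | some a, some b => t a b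
    | _, _ => False
  iseqv := by
    refine ⟨?_, ?_, ?_⟩
    · rintro (_|a)
      · trivial
      · exact t.refl a
    · rintro (_|a) (_|b) h <;> simp_all
      exact t.symm h
    · rintro (_|a) (_|b) (_|c) h1 h2 <;> simp_all
      exact t.trans h1 h2

lemma optionSetoid_none_none {γ : Type*} (t : Setoid γ) :
    optionSetoid t none none ↔ True := Iff.rfl

lemma optionSetoid_none_some {γ : Type*} (t : Setoid γ) (b : γ) :
    optionSetoid t none (some b) ↔ False := Iff.rfl

lemma optionSetoid_some_none {γ : Type*} (t : Setoid γ) (a : γ) :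
    optionSetoid t (some a) none ↔ False := Iff.rfl

lemma optionSetoid_some_some {γ : Type*} (t : Setoid γ) (a b : γ) :
    optionSetoid t (some a) (some b) ↔ t a b := Iff.rfl

def setoidCongr {α γ : Type*} (e : α ≃ γ) : Setoid α ≃ Setoid γ where
  toFun r := Setoid.comap e.symm r
  invFun r := Setoid.comap e r
  left_inv r := Setoid.ext fun a b => by simp [Setoid.comap_rel]
  right_inv r := Setoid.ext fun a b => by simp [Setoid.comap_rel]

section Phi
variable {β : Type*} [Fintype β] [DecidableEq β]

/-- collapse map -/
def collapse (s : Finset β) : Option β → Option {x : β // x ∉ s}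
  | none => none
  | some a => if h : a ∈ s then none else some ⟨a, h⟩

lemma collapse_none (s : Finset β) : collapse s none = none := rfl

lemma collapse_some (s : Finset β) (a : β) :
    collapse s (some a) = if h : a ∈ s then none else some ⟨a, h⟩ := rfl

def Phi (p : Σ s : Finset β, Setoid {x : β // x ∉ s}) : Setoid (Option β) :=
  Setoid.comap (collapse p.1) (optionSetoid p.2)

lemma Phi_iff (p : Σ s : Finset β, Setoid {x : β // x ∉ s}) (x y : Option β) :
    Phi p x y ↔ optionSetoid p.2 (collapse p.1 x) (collapse p.1 y) := Iff.rfl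

lemma Phi_none_some (p : Σ s : Finset β, Setoid {x : β // x ∉ s}) (b : β) :
    Phi p none (some b) ↔ b ∈ p.1 := by
  rw [Phi_iff, collapse_none, collapse_some]
  split_ifs with h
  · simp [optionSetoid_none_none, h]
  · simp [optionSetoid_none_some, h]

lemma Phi_some_some (p : Σ s : Finset β, Setoid {x : β // x ∉ s}) (a b : β)
    (ha : a ∉ p.1) (hb : b ∉ p.1) :
    Phi p (some a) (some b) ↔ p.2 ⟨a, ha⟩ ⟨b, hb⟩ := by
  rw [Phi_iff, collapse_some, collapse_some, dif_neg ha, dif_neg hb,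
    optionSetoid_some_some]

lemma Phi_injective : Function.Injective (Phi (β := β)) := by
  rintro ⟨s, t⟩ ⟨s', t'⟩ h
  have hs : s = s' := by
    ext b
    rw [← Phi_none_some ⟨s, t⟩ b, ← Phi_none_some ⟨s', t'⟩ b, h]
  subst hs
  have ht : t = t' := by
    apply Setoid.ext
    rintro ⟨a, ha⟩ ⟨b, hb⟩
    rw [← Phi_some_some ⟨s, t⟩ a b ha hb, ← Phi_some_some ⟨s, t'⟩ a b ha hb, h]
  rw [ht]

lemma Phi_surjective : Function.Surjective (Phi (β := β)) := by
  intro r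
  classical
  set s : Finset β := Finset.univ.filter (fun b => r (some b) none) with hs
  have hmem : ∀ b, b ∈ s ↔ r (some b) none := by
    intro b; simp [hs]
  refine ⟨⟨s, Setoid.comap (fun x : {x : β // x ∉ s} => some x.1) r⟩, ?_⟩
  apply Setoid.ext
  rintro (_|a) (_|b)
  · rw [Phi_iff, collapse_none, optionSetoid_none_none]
    exact ⟨fun _ => r.refl none, fun _ => trivial⟩
  · rw [Phi_none_some]
    show b ∈ s ↔ _
    rw [hmem]
    exact ⟨fun h => r.symm h, fun h => r.symm h⟩
  · rw [Phi_iff, collapse_none, collapse_some]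
    split_ifs with h
    · rw [optionSetoid_none_none, hmem] at *
      exact ⟨fun _ => h, fun _ => trivial⟩
    · rw [optionSetoid_some_none]
      rw [hmem] at h
      simp only [false_iff]
      exact h
  · rw [Phi_iff, collapse_some, collapse_some]
    split_ifs with ha hb hb
    · rw [optionSetoid_none_none]
      rw [hmem] at ha hb
      simp only [true_iff]
      exact r.trans ha (r.symm hb)
    · rw [optionSetoid_none_some]
      rw [hmem] at ha hb
      simp only [false_iff]
      intro hab
      exact hb (r.trans (r.symm hab) ha)
    · rw [optionSetoid_some_none]
      rw [hmem] at ha hb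
      simp only [false_iff]
      intro hab
      exact ha (r.trans hab hb)
    · rw [optionSetoid_some_some]
      exact Iff.rfl

end Phi

lemma bellNumber_zero : bellNumber 0 = 1 := by
  rw [bellNumber]
  rw [Nat.card_eq_one_iff_unique]
  constructor
  · exact ⟨fun s t => Setoid.ext fun a => a.elim0⟩
  · exact ⟨⟨fun _ _ => True, ⟨fun _ => trivial, fun h => h, fun h _ => h⟩⟩⟩

lemma bellNumber_card_setoid {α : Type*} [Fintype α] :
    Nat.card (Setoid α) = bellNumber (Fintype.card α) := by
  rw [bellNumber]
  exact Nat.card_congr (setoidCongr (Fintype.equivFin α))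

lemma bellNumber_succ (n : ℕ) :
    bellNumber (n + 1) = ∑ i ∈ Finset.range (n + 1), n.choose i * bellNumber i := by
  classical
  have e1 : Setoid (Fin (n+1)) ≃ Setoid (Option (Fin n)) := setoidCongr (finSuccEquiv n)
  have e2 : (Σ s : Finset (Fin n), Setoid {x : Fin n // x ∉ s}) ≃ Setoid (Option (Fin n)) :=
    Equiv.ofBijective Phi ⟨Phi_injective, Phi_surjective⟩
  have h1 : bellNumber (n+1) = Nat.card (Σ s : Finset (Fin n), Setoid {x : Fin n // x ∉ s}) := by
    rw [bellNumber, Nat.card_congr e1, Nat.card_congr e2.symm]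
  rw [h1]
  letI : ∀ s : Finset (Fin n), Fintype (Setoid {x : Fin n // x ∉ s}) :=
    fun s => Fintype.ofFinite _
  rw [Nat.card_eq_fintype_card, Fintype.card_sigma]
  have h2 : ∀ s : Finset (Fin n), Fintype.card (Setoid {x : Fin n // x ∉ s}) =
      bellNumber (n - s.card) := by
    intro s
    have e3 : {x : Fin n // x ∉ s} ≃ Fin (n - s.card) := by
      refine (Equiv.subtypeEquivRight (q := fun x => x ∈ sᶜ) (by simp)).trans
        ((sᶜ.equivFin).trans (finCongr ?_))
      simp [Finset.card_compl]
    rw [← Nat.card_eq_fintype_card, Nat.card_congr (setoidCongr e3), ← bellNumber]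
  simp_rw [h2]
  have h3 : ∑ s : Finset (Fin n), bellNumber (n - s.card)
      = ∑ j ∈ Finset.range (n + 1), n.choose j * bellNumber (n - j) := by
    rw [← Finset.powerset_univ, Finset.sum_powerset]
    rw [Finset.card_univ, Fintype.card_fin]
    refine Finset.sum_congr rfl fun j hj => ?_
    rw [Finset.sum_congr rfl (fun t ht => ?_), Finset.sum_const, smul_eq_mul,
      Finset.card_powersetCard, Finset.card_univ, Fintype.card_fin]
    rw [(Finset.mem_powersetCard.mp ht).2]
  rw [h3, ← Finset.sum_range_reflect]
  refine Finset.sum_congr rfl fun j hj => ?_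
  have hj' : j ≤ n := Nat.lt_succ_iff.mp (Finset.mem_range.mp hj)
  have : n + 1 - 1 - j = n - j := rfl
  rw [this, Nat.choose_symm hj', Nat.sub_sub_self hj']

noncomputable def dob (n : ℕ) : ℝ := ∑' k : ℕ, (k : ℝ) ^ n / (Nat.factorial k : ℝ)

lemma shift_eq (n k : ℕ) : (((k : ℕ) + 1 : ℕ) : ℝ) ^ (n + 1) / (Nat.factorial (k + 1) : ℝ)
    = ∑ i ∈ range (n + 1), (n.choose i : ℝ) * ((k : ℝ) ^ i / (Nat.factorial k : ℝ)) := by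
  have hk : ((k : ℝ) + 1) ≠ 0 := by positivity
  have h1 : (Nat.factorial (k + 1) : ℝ) = ((k : ℝ) + 1) * (Nat.factorial k : ℝ) := by
    rw [Nat.factorial_succ]; push_cast; ring
  have h3 : ((k : ℝ) + 1) ^ n = ∑ i ∈ range (n + 1), (k : ℝ) ^ i * (n.choose i : ℝ) := by
    simpa using add_pow (k : ℝ) 1 n
  push_cast
  have key : ((k : ℝ) + 1) ^ (n + 1) / (((k : ℝ) + 1) * (Nat.factorial k : ℝ))
      = ((k : ℝ) + 1) ^ n / (Nat.factorial k : ℝ) := by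
    rw [pow_succ, mul_comm (((k : ℝ) + 1) ^ n) _, mul_div_mul_left _ _ hk]
  rw [h1, key, h3, Finset.sum_div]
  exact Finset.sum_congr rfl fun i _ => by ring

lemma summable_dob (n : ℕ) : Summable (fun k : ℕ => (k : ℝ) ^ n / (Nat.factorial k : ℝ)) := by
  induction n using Nat.strong_induction_on with
  | _ n ih =>
    match n with
    | 0 =>
      refine (Real.summable_pow_div_factorial 1).congr fun k => ?_
      simp
    | m + 1 =>
      apply (summable_nat_add_iff 1).mp
      refine (summable_sum (s := range (m + 1))
        (f := fun (i : ℕ) (k : ℕ) => (m.choose i : ℝ) * ((k : ℝ) ^ i / (Nat.factorial k : ℝ)))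
        fun i hi => ((ih i (Finset.mem_range.mp hi)).mul_left _)).congr fun k => ?_
      exact (shift_eq m k).symm

lemma dob_succ (n : ℕ) : dob (n + 1) = ∑ i ∈ range (n + 1), (n.choose i : ℝ) * dob i := by
  rw [dob, Summable.tsum_eq_zero_add (summable_dob (n + 1))]
  have h0 : ((0 : ℕ) : ℝ) ^ (n + 1) / (Nat.factorial 0 : ℝ) = 0 := by simp
  rw [h0, zero_add]
  rw [tsum_congr (fun k => shift_eq n k)]
  rw [Summable.tsum_finsetSum (fun i hi => ((summable_dob i).mul_left _))]
  exact Finset.sum_congr rfl fun i _ => tsum_mul_left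

lemma dob_zero : dob 0 = Real.exp 1 := by
  rw [dob, Real.exp_eq_exp_ℝ, NormedSpace.exp_eq_tsum_div]
  simp

lemma dobinski_mul (n : ℕ) : (bellNumber n : ℝ) * Real.exp 1 = dob n := by
  induction n using Nat.strong_induction_on with
  | _ n ih =>
    match n with
    | 0 => rw [bellNumber_zero, dob_zero]; simp
    | m + 1 =>
      rw [bellNumber_succ, dob_succ]
      push_cast
      rw [Finset.sum_mul]
      refine Finset.sum_congr rfl fun i hi => ?_
      rw [mul_assoc, ih i (Finset.mem_range.mp hi)]

lemma dobinski (n : ℕ) : (bellNumber n : ℝ) = Real.exp (-1) * dob n := by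
  rw [← dobinski_mul n, Real.exp_neg]
  field_simp

open MeasureTheory in
theorem stmt_4 :
    (∀ n : ℕ, (bellNumber n : ℝ) =
        Real.exp (-1) * ∑' k : ℕ, (k : ℝ) ^ n / (Nat.factorial k : ℝ)) ∧
    ∃ μ : MeasureTheory.Measure ℝ, μ (Set.Iio 0) = 0 ∧
      (∀ k : ℕ, μ {(k : ℝ)} = ENNReal.ofReal (Real.exp (-1) / Nat.factorial k)) ∧
      ∀ n : ℕ, (bellNumber n : ℝ) = ∫ x, x ^ n ∂μ := by
  refine ⟨fun n => dobinski n, ?_⟩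
  set c : ℕ → ENNReal := fun k => ENNReal.ofReal (Real.exp (-1) / (Nat.factorial k : ℝ)) with hc
  refine ⟨Measure.sum (fun k : ℕ => c k • Measure.dirac ((k : ℕ) : ℝ)), ?_, ?_, ?_⟩
  · rw [Measure.sum_apply _ measurableSet_Iio]
    refine ENNReal.tsum_eq_zero.mpr fun k => ?_
    rw [Measure.smul_apply, Measure.dirac_apply' _ measurableSet_Iio,
      Set.indicator_of_notMem (by simp), smul_zero]
  · intro k
    rw [Measure.sum_apply _ (measurableSet_singleton _)]
    rw [tsum_eq_single k ?_]
    · rw [Measure.smul_apply, Measure.dirac_apply' _ (measurableSet_singleton _)]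
      simp [hc]
    · intro j hj
      rw [Measure.smul_apply, Measure.dirac_apply' _ (measurableSet_singleton _),
        Set.indicator_of_notMem (by simpa using hj),
        smul_zero]
  · intro n
    have hint : Integrable (fun x : ℝ => x ^ n)
        (Measure.sum (fun k : ℕ => c k • Measure.dirac ((k : ℕ) : ℝ))) := by
      refine ⟨(measurable_id.pow_const n).aestronglyMeasurable, ?_⟩
      rw [hasFiniteIntegral_def, lintegral_sum_measure]
      have h1 : ∀ k : ℕ, ∫⁻ a, ‖a ^ n‖ₑ ∂(c k • Measure.dirac ((k : ℕ) : ℝ))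
          = ENNReal.ofReal (Real.exp (-1) * ((k : ℝ) ^ n / (Nat.factorial k : ℝ))) := by
        intro k
        rw [lintegral_smul_measure, lintegral_dirac,
          Real.enorm_eq_ofReal (by positivity)]
        simp only [hc, smul_eq_mul]
        rw [← ENNReal.ofReal_mul (by positivity)]
        congr 1
        ring
      rw [tsum_congr h1, ← ENNReal.ofReal_tsum_of_nonneg (fun k => by positivity)
        ((summable_dob n).mul_left _)]
      exact ENNReal.ofReal_lt_top
    rw [integral_sum_measure hint]
    have h2 : ∀ k : ℕ, (∫ x, x ^ n ∂(c k • Measure.dirac ((k : ℕ) : ℝ)))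
        = Real.exp (-1) * ((k : ℝ) ^ n / (Nat.factorial k : ℝ)) := by
      intro k
      rw [integral_smul_measure, integral_dirac, hc,
        ENNReal.toReal_ofReal (by positivity), smul_eq_mul]
      ring
    rw [tsum_congr h2, tsum_mul_left]
    exact dobinski n
end

section
/- Let (r_{n,k}) be defined by r_{0,0} = 1, r_{n,k} = 0 unless n ≥ k ≥ 0, and r_{n+1,k} = r_{n,k−1} + s_k r_{n,k} + t_{k+1} r_{n,k+1}. Then the Hankel matrix of the Catalan-like numbers factors as H = R T Rᵗ, i.e., for all i, j ≥ 0: r_{i+j,0} = ∑_{k≥0} r_{i,k} T_k r_{j,k}, where T_0 = 1 and T_k = t_1 t_2 ⋯ t_k. -/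
private lemma shift_sum (w : ℕ → ℝ) (M : ℕ) (hw : w M = 0) :
    ∑ k ∈ Finset.range M, w (k + 1) + w 0 = ∑ k ∈ Finset.range M, w k := by
  rw [← Finset.sum_range_succ' w M, Finset.sum_range_succ, hw, add_zero]

private lemma key_lemma (s t T : ℕ → ℝ) (r : ℕ → ℕ → ℝ)
    (hT0 : T 0 = 1) (hTs : ∀ k, T (k + 1) = T k * t (k + 1))
    (hz : ∀ n k : ℕ, n < k → r n k = 0)
    (hrec0 : ∀ n : ℕ, r (n + 1) 0 = s 0 * r n 0 + t 1 * r n 1)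
    (hrec : ∀ n k : ℕ, r (n + 1) (k + 1) =
      r n k + s (k + 1) * r n (k + 1) + t (k + 2) * r n (k + 2))
    (i j : ℕ) :
    ∑ k ∈ Finset.range (i + j + 3), r (i + 1) k * T k * r j k
      = ∑ k ∈ Finset.range (i + j + 3), r i k * T k * r (j + 1) k := by
  set M := i + j + 2 with hMdef
  have hzi : r i (M + 1) = 0 := hz _ _ (by omega)
  have hzj : r j (M + 1) = 0 := hz _ _ (by omega)
  have hT1 : T 1 = t 1 := by rw [hTs 0, hT0, one_mul]
  rw [show i + j + 3 = M + 1 from rfl,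
      Finset.sum_range_succ' (fun k => r (i + 1) k * T k * r j k) M,
      Finset.sum_range_succ' (fun k => r i k * T k * r (j + 1) k) M]
  simp only [hrec, hrec0, hT0]
  have L : ∑ k ∈ Finset.range M,
        (r i k + s (k + 1) * r i (k + 1) + t (k + 2) * r i (k + 2)) * T (k + 1) * r j (k + 1)
      = ∑ k ∈ Finset.range M,
        (T (k + 1) * r i k * r j (k + 1)
          + s (k + 1) * (r i (k + 1) * T (k + 1) * r j (k + 1))
          + T (k + 1 + 1) * r i (k + 1 + 1) * r j (k + 1)) := by
    refine Finset.sum_congr rfl fun k _ => ?_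
    rw [hTs (k + 1)]; ring
  have R : ∑ k ∈ Finset.range M,
        r i (k + 1) * T (k + 1) * (r j k + s (k + 1) * r j (k + 1) + t (k + 2) * r j (k + 2))
      = ∑ k ∈ Finset.range M,
        (T (k + 1) * r i (k + 1) * r j k
          + s (k + 1) * (r i (k + 1) * T (k + 1) * r j (k + 1))
          + T (k + 1 + 1) * r i (k + 1) * r j (k + 1 + 1)) := by
    refine Finset.sum_congr rfl fun k _ => ?_
    rw [hTs (k + 1)]; ring
  rw [L, R, Finset.sum_add_distrib, Finset.sum_add_distrib, Finset.sum_add_distrib, Finset.sum_add_distrib]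
  have h1 : ∑ x ∈ Finset.range M, T (x + 1 + 1) * r i (x + 1 + 1) * r j (x + 1)
        + T 1 * r i 1 * r j 0
      = ∑ x ∈ Finset.range M, T (x + 1) * r i (x + 1) * r j x :=
    shift_sum (fun k => T (k + 1) * r i (k + 1) * r j k) M (by show T (M + 1) * r i (M + 1) * r j M = 0; rw [hzi]; ring)
  have h2 : ∑ x ∈ Finset.range M, T (x + 1 + 1) * r i (x + 1) * r j (x + 1 + 1)
        + T 1 * r i 0 * r j 1
      = ∑ x ∈ Finset.range M, T (x + 1) * r i x * r j (x + 1) :=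
    shift_sum (fun k => T (k + 1) * r i k * r j (k + 1)) M (by show T (M + 1) * r i M * r j (M + 1) = 0; rw [hzj]; ring)
  linear_combination h1 - h2 + (r i 0 * r j 1 - r i 1 * r j 0) * hT1

theorem stmt_5 (s : ℕ → ℝ) (t : ℕ → ℝ) (r : ℕ → ℕ → ℝ)
    (h00 : r 0 0 = 1)
    (hz : ∀ n k : ℕ, n < k → r n k = 0)
    (hrec0 : ∀ n : ℕ, r (n + 1) 0 = s 0 * r n 0 + t 1 * r n 1)
    (hrec : ∀ n k : ℕ, r (n + 1) (k + 1) =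
      r n k + s (k + 1) * r n (k + 1) + t (k + 2) * r n (k + 2)) :
    ∀ i j : ℕ, r (i + j) 0 =
      ∑' k : ℕ, r i k * (∏ m ∈ Finset.range k, t (m + 1)) * r j k := by
  have key : ∀ a b : ℕ,
      ∑ k ∈ Finset.range (a + b + 3), r (a + 1) k * (∏ m ∈ Finset.range k, t (m + 1)) * r b k
        = ∑ k ∈ Finset.range (a + b + 3), r a k * (∏ m ∈ Finset.range k, t (m + 1)) * r (b + 1) k :=
    fun a b => key_lemma s t (fun k => ∏ m ∈ Finset.range k, t (m + 1)) r (by simp)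
      (fun k => Finset.prod_range_succ _ _) hz hrec0 hrec a b
  have hsum : ∀ a b N : ℕ, a < N →
      (∑' k : ℕ, r a k * (∏ m ∈ Finset.range k, t (m + 1)) * r b k)
        = ∑ k ∈ Finset.range N, r a k * (∏ m ∈ Finset.range k, t (m + 1)) * r b k := by
    intro a b N hN
    refine tsum_eq_sum fun c hc => ?_
    rw [hz a c (by simp only [Finset.mem_range, not_lt] at hc; omega)]
    ring
  intro i
  induction i with
  | zero =>
    intro j
    rw [hsum 0 j 1 Nat.one_pos, Finset.sum_range_one]
    simp [h00]
  | succ i ih =>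
    intro j
    rw [hsum (i + 1) j (i + j + 3) (by omega), key i j,
      ← hsum i (j + 1) (i + j + 3) (by omega), ← ih (j + 1)]
    congr 1
    omega
end

section
/- If the infinite tridiagonal coefficient matrix J^{σ,τ} is totally positive (every minor is nonnegative), then the recursive matrix R^{σ,τ} defined by r_{0,0}=1 and r_{n+1,k} = r_{n,k−1} + s_k r_{n,k} + t_{k+1} r_{n,k+1} is totally positive. -/
open Finset Matrix

/-- Cauchy–Binet style nonnegativity: if all "ordered minors" of `A` (columns) and `B` (rows)
are nonnegative, then the determinant of the finite product is nonnegative. -/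
lemma det_sum_mul_nonneg (p M : ℕ) (A : Fin p → ℕ → ℝ) (B : ℕ → Fin p → ℝ)
    (hA : ∀ e : Fin p → ℕ, StrictMono e →
      0 ≤ Matrix.det (Matrix.of fun i j : Fin p => A i (e j)))
    (hB : ∀ e : Fin p → ℕ, StrictMono e →
      0 ≤ Matrix.det (Matrix.of fun i j : Fin p => B (e i) j)) :
    0 ≤ Matrix.det (Matrix.of fun i j : Fin p => ∑ m ∈ Finset.range M, A i m * B m j) := by
  classical
  set F : (Fin p → ℕ) → ℝ :=
    fun c => (∏ i, A i (c i)) * Matrix.det (Matrix.of fun i j : Fin p => B (c i) j) with hF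
  have h1 : Matrix.det (Matrix.of fun i j : Fin p => ∑ m ∈ Finset.range M, A i m * B m j)
      = ∑ c ∈ Fintype.piFinset (fun _ : Fin p => Finset.range M), F c := by
    have h0 : (Matrix.of fun i j : Fin p => ∑ m ∈ Finset.range M, A i m * B m j)
        = fun i => ∑ m ∈ Finset.range M, (fun j => A i m * B m j) := by
      funext i j
      simp
    have h2 := (Matrix.detRowAlternating : (Fin p → ℝ) [⋀^Fin p]→ₗ[ℝ] ℝ).toMultilinearMap.map_sum_finset
      (fun i m => fun j => A i m * B m j) (fun _ : Fin p => Finset.range M)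
    have h3 : Matrix.det (Matrix.of fun i j : Fin p => ∑ m ∈ Finset.range M, A i m * B m j)
        = (Matrix.detRowAlternating : (Fin p → ℝ) [⋀^Fin p]→ₗ[ℝ] ℝ).toMultilinearMap
            (fun i => ∑ m ∈ Finset.range M, (fun j => A i m * B m j)) := by
      rw [← h0]; rfl
    refine h3.trans (h2.trans (Finset.sum_congr rfl fun c _ => ?_))
    have h4 : ((Matrix.detRowAlternating : (Fin p → ℝ) [⋀^Fin p]→ₗ[ℝ] ℝ).toMultilinearMap
          (fun i => fun j => A i (c i) * B (c i) j))
        = Matrix.det (Matrix.of fun i j : Fin p => A i (c i) * B (c i) j) := rfl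
    rw [h4]; exact Matrix.det_mul_column (fun i => A i (c i)) (Matrix.of fun i j : Fin p => B (c i) j)
  rw [h1, ← Finset.sum_filter_of_ne (p := fun c => Function.Injective c)
    (fun c _ hc => by
      by_contra hinj
      apply hc
      simp only [Function.Injective, not_forall] at hinj
      obtain ⟨a, b, hab, hne⟩ := hinj
      have : Matrix.det (Matrix.of fun i j : Fin p => B (c i) j) = 0 :=
        Matrix.det_zero_of_row_eq hne (by funext j; simp [hab])
      simp [hF, this])]
  -- total version of `orderEmbOfFin`
  set emb : Finset ℕ → Fin p → ℕ :=
    fun S => if h : S.card = p then fun i => S.orderEmbOfFin h i else fun _ => 0 with hembdef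
  have hembS : ∀ (S : Finset ℕ) (h : S.card = p) (i : Fin p), emb S i = S.orderEmbOfFin h i := by
    intro S h i; simp [hembdef, h]
  have hcard : ∀ c : Fin p → ℕ, Function.Injective c →
      (Finset.image c Finset.univ).card = p := by
    intro c hc
    rw [Finset.card_image_of_injective _ hc, Finset.card_univ, Fintype.card_fin]
  have hcmem : ∀ (c : Fin p → ℕ) (i : Fin p), c i ∈ Finset.image c Finset.univ := by
    intro c i; exact Finset.mem_image_of_mem c (Finset.mem_univ i)
  set permOf : (Fin p → ℕ) → Equiv.Perm (Fin p) := fun c =>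
    if hc : Function.Injective c then
      Equiv.ofBijective
        (fun i => ((Finset.image c Finset.univ).orderIsoOfFin (hcard c hc)).symm
          ⟨c i, hcmem c i⟩)
        (Finite.injective_iff_bijective.mp (fun a b hab => hc (by
          have := congrArg
            (fun z => (((Finset.image c Finset.univ).orderIsoOfFin (hcard c hc)) z : ℕ)) hab
          simpa using this)))
    else 1 with hpermdef
  have hperm : ∀ (c : Fin p → ℕ) (hc : Function.Injective c) (i : Fin p),
      (Finset.image c Finset.univ).orderEmbOfFin (hcard c hc) (permOf c i) = c i := by
    intro c hc i
    rw [← Finset.coe_orderIsoOfFin_apply]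
    simp [hpermdef, hc, Equiv.ofBijective]
  have hkey : ∑ c ∈ (Fintype.piFinset fun _ : Fin p => Finset.range M).filter
        (fun c => Function.Injective c), F c
      = ∑ x ∈ ((Finset.range M).powersetCard p) ×ˢ
            (Finset.univ : Finset (Equiv.Perm (Fin p))),
          F (fun i => emb x.1 (x.2 i)) := by
    refine (Finset.sum_bij' (fun x _ => fun i => emb x.1 (x.2 i))
      (fun c _ => (Finset.image c Finset.univ, permOf c)) ?_ ?_ ?_ ?_ ?_).symm
    · -- hi : maps product into filter
      rintro ⟨S, σ⟩ hx
      obtain ⟨hS, -⟩ := Finset.mem_product.mp hx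
      obtain ⟨hsub, hSc⟩ := Finset.mem_powersetCard.mp hS
      refine Finset.mem_filter.mpr ⟨Fintype.mem_piFinset.mpr fun i => ?_, ?_⟩
      · show emb S (σ i) ∈ Finset.range M
        rw [hembS S hSc]
        exact hsub (Finset.orderEmbOfFin_mem S hSc (σ i))
      · intro a b hab
        have hab' : emb S (σ a) = emb S (σ b) := hab
        rw [hembS S hSc, hembS S hSc] at hab'
        exact σ.injective ((S.orderEmbOfFin hSc).injective hab')
    · -- hj : maps filter into product
      intro c hc
      obtain ⟨hmem, hinj⟩ := Finset.mem_filter.mp hc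
      refine Finset.mem_product.mpr ⟨Finset.mem_powersetCard.mpr ⟨?_, hcard c hinj⟩,
        Finset.mem_univ _⟩
      intro x hx
      obtain ⟨i, -, rfl⟩ := Finset.mem_image.mp hx
      exact Fintype.mem_piFinset.mp hmem i
    · -- left_inv : j (i x) = x
      rintro ⟨S, σ⟩ hx
      obtain ⟨hS, -⟩ := Finset.mem_product.mp hx
      obtain ⟨hsub, hSc⟩ := Finset.mem_powersetCard.mp hS
      set c : Fin p → ℕ := fun i => emb S (σ i) with hcdef
      have hcinj : Function.Injective c := by
        intro a b hab
        rw [hcdef] at hab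
        simp only [hembS S hSc] at hab
        exact σ.injective ((S.orderEmbOfFin hSc).injective hab)
      have himg : Finset.image c Finset.univ = S := by
        apply Finset.coe_injective
        rw [Finset.coe_image, Finset.coe_univ, Set.image_univ]
        have : Set.range c = Set.range (S.orderEmbOfFin hSc) := by
          rw [hcdef]
          ext x
          constructor
          · rintro ⟨i, rfl⟩; exact ⟨σ i, (hembS S hSc (σ i)).symm⟩
          · rintro ⟨i, rfl⟩
            refine ⟨σ.symm i, ?_⟩
            show emb S (σ (σ.symm i)) = _
            rw [Equiv.apply_symm_apply, hembS S hSc]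
        rw [this, Finset.range_orderEmbOfFin]
      have hsnd : permOf c = σ := by
        ext i
        have h1 : emb (Finset.image c Finset.univ) (permOf c i) = c i := by
          rw [hembS _ (hcard c hcinj)]; exact hperm c hcinj i
        rw [himg] at h1
        have h2 : emb S (σ i) = c i := rfl
        rw [hembS S hSc] at h1 h2
        exact congrArg Fin.val ((S.orderEmbOfFin hSc).injective (h1.trans h2.symm))
      exact Prod.ext himg hsnd
    · -- right_inv : i (j c) = c
      intro c hc
      obtain ⟨-, hinj⟩ := Finset.mem_filter.mp hc
      funext i
      show emb (Finset.image c Finset.univ) (permOf c i) = c i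
      rw [hembS _ (hcard c hinj)]
      exact hperm c hinj i
    · intro c hc
      rfl
  rw [hkey, Finset.sum_product]
  refine Finset.sum_nonneg fun S hS => ?_
  obtain ⟨hsub, hSc⟩ := Finset.mem_powersetCard.mp hS
  have hstr : StrictMono (fun i => (S.orderEmbOfFin hSc) i) := (S.orderEmbOfFin hSc).strictMono
  show 0 ≤ ∑ σ ∈ (Finset.univ : Finset (Equiv.Perm (Fin p))), F (fun i => emb S (σ i))
  have hdetB : ∀ σ : Equiv.Perm (Fin p),
      Matrix.det (Matrix.of fun i j : Fin p => B (emb S (σ i)) j)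
        = ((Equiv.Perm.sign σ : ℤ) : ℝ) *
          Matrix.det (Matrix.of fun i j : Fin p => B (S.orderEmbOfFin hSc i) j) := by
    intro σ
    have hsub2 : (Matrix.of fun i j : Fin p => B (emb S (σ i)) j)
        = (Matrix.of fun i j : Fin p => B (S.orderEmbOfFin hSc i) j).submatrix σ id := by
      funext i j
      show B (emb S (σ i)) j = B (S.orderEmbOfFin hSc (σ i)) j
      rw [hembS S hSc]
    rw [hsub2, Matrix.det_permute]
  have hinner : ∑ σ ∈ (Finset.univ : Finset (Equiv.Perm (Fin p))), F (fun i => emb S (σ i))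
      = Matrix.det (Matrix.of fun i j : Fin p => A i (S.orderEmbOfFin hSc j)) *
        Matrix.det (Matrix.of fun i j : Fin p => B (S.orderEmbOfFin hSc i) j) := by
    calc ∑ σ ∈ (Finset.univ : Finset (Equiv.Perm (Fin p))), F (fun i => emb S (σ i))
        = ∑ σ ∈ (Finset.univ : Finset (Equiv.Perm (Fin p))),
            ((Equiv.Perm.sign σ : ℤ) : ℝ) * (∏ i, A i (S.orderEmbOfFin hSc (σ i))) *
            Matrix.det (Matrix.of fun i j : Fin p => B (S.orderEmbOfFin hSc i) j) := by
          refine Finset.sum_congr rfl fun σ _ => ?_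
          show (∏ i, A i (emb S (σ i))) *
              Matrix.det (Matrix.of fun i j : Fin p => B (emb S (σ i)) j) = _
          rw [hdetB σ]
          simp only [hembS S hSc]
          ring
      _ = (∑ σ ∈ (Finset.univ : Finset (Equiv.Perm (Fin p))),
            ((Equiv.Perm.sign σ : ℤ) : ℝ) * ∏ i, A i (S.orderEmbOfFin hSc (σ i))) *
            Matrix.det (Matrix.of fun i j : Fin p => B (S.orderEmbOfFin hSc i) j) := by
          rw [← Finset.sum_mul]
      _ = Matrix.det (Matrix.of fun i j : Fin p => A i (S.orderEmbOfFin hSc j)) *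
            Matrix.det (Matrix.of fun i j : Fin p => B (S.orderEmbOfFin hSc i) j) := by
          congr 1
          rw [← Matrix.det_transpose (Matrix.of fun i j : Fin p => A i (S.orderEmbOfFin hSc j)),
            Matrix.det_apply]
          refine (Finset.sum_congr rfl fun σ _ => ?_).symm
          simp only [Matrix.transpose_apply, Matrix.of_apply, Units.smul_def, zsmul_eq_mul]
  rw [hinner]
  exact mul_nonneg (hA _ hstr) (hB _ hstr)


/-- An infinite real matrix is totally positive if all its finite minors
(with rows and columns selected in increasing order) are nonnegative. -/
def TotallyPositive (M : ℕ → ℕ → ℝ) : Prop :=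
  ∀ (n : ℕ) (f g : Fin n → ℕ), StrictMono f → StrictMono g →
    0 ≤ Matrix.det (Matrix.of fun i j : Fin n => M (f i) (g j))

theorem stmt_6 (s t : ℕ → ℝ) (hs : ∀ k, 0 ≤ s k) (ht : ∀ k, 1 ≤ k → 0 ≤ t k)
    (r : ℕ → ℕ → ℝ)
    (h00 : r 0 0 = 1)
    (hz : ∀ n k : ℕ, n < k → r n k = 0)
    (hrec0 : ∀ n : ℕ, r (n + 1) 0 = s 0 * r n 0 + t 1 * r n 1)
    (hrec : ∀ n k : ℕ, r (n + 1) (k + 1) =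
      r n k + s (k + 1) * r n (k + 1) + t (k + 2) * r n (k + 2))
    (hJ : TotallyPositive (jacobiMatrix s t)) :
    TotallyPositive r := by
  have hsum : ∀ n k M : ℕ, k + 2 ≤ M →
      r (n + 1) k = ∑ m ∈ Finset.range M, r n m * jacobiMatrix s t m k := by
    intro n k M hM
    have hzero : ∀ m ∈ Finset.range M, m ∉ Finset.range (k + 2) →
        r n m * jacobiMatrix s t m k = 0 := by
      intro m _ hm
      have hm2 : k + 2 ≤ m := by simpa [Finset.mem_range, not_lt] using hm
      have hJ0 : jacobiMatrix s t m k = 0 := by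
        unfold jacobiMatrix
        rw [if_neg (by omega), if_neg (by omega), if_neg (by omega)]
      rw [hJ0, mul_zero]
    rw [← Finset.sum_subset (Finset.range_subset_range.mpr hM) hzero]
    cases k with
    | zero =>
      rw [show (0:ℕ)+2 = 2 from rfl, Finset.sum_range_succ, Finset.sum_range_succ,
        Finset.sum_range_zero]
      unfold jacobiMatrix
      norm_num
      rw [hrec0 n]
      ring
    | succ k =>
      rw [show k+1+2 = (k+2)+1 from rfl, Finset.sum_range_succ, Finset.sum_range_succ,
        Finset.sum_range_succ]
      have hrest : ∑ m ∈ Finset.range k, r n m * jacobiMatrix s t m (k+1) = 0 := by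
        refine Finset.sum_eq_zero fun m hm => ?_
        have hmk := Finset.mem_range.mp hm
        have hJ0 : jacobiMatrix s t m (k+1) = 0 := by
          unfold jacobiMatrix
          rw [if_neg (by omega), if_neg (by omega), if_neg (by omega)]
        rw [hJ0, mul_zero]
      have e1 : jacobiMatrix s t k (k+1) = 1 := by
        unfold jacobiMatrix
        rw [if_neg (by omega), if_pos rfl]
      have e2 : jacobiMatrix s t (k+1) (k+1) = s (k+1) := by
        unfold jacobiMatrix
        rw [if_pos rfl]
      have e3 : jacobiMatrix s t (k+2) (k+1) = t (k+2) := by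
        unfold jacobiMatrix
        rw [if_neg (by omega), if_neg (by omega), if_pos rfl]
      rw [hrest, e1, e2, e3, hrec n k]
      ring
  have main : ∀ N p : ℕ, ∀ f g : Fin p → ℕ, StrictMono f → StrictMono g →
      p + ∑ i, f i ≤ N → 0 ≤ Matrix.det (Matrix.of fun i j : Fin p => r (f i) (g j)) := by
    intro N
    induction N with
    | zero =>
      intro p f g hf hg hle
      have hp : p = 0 := by omega
      subst hp
      rw [Matrix.det_fin_zero]
      norm_num
    | succ N ih =>
      intro p f g hf hg hle
      cases p with
      | zero =>
        rw [Matrix.det_fin_zero]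
        norm_num
      | succ q =>
        by_cases hf0 : f 0 = 0
        · by_cases hg0 : g 0 = 0
          · -- Laplace expansion along the first row
            have hz0 : ∀ j : Fin q, r 0 (g j.succ) = 0 := by
              intro j
              have hpos : 0 < g j.succ := by
                have := hg (Fin.succ_pos j)
                omega
              exact hz 0 (g j.succ) hpos
            have hdet : Matrix.det (Matrix.of fun i j : Fin (q+1) => r (f i) (g j))
                = Matrix.det (Matrix.of fun i j : Fin q => r (f i.succ) (g j.succ)) := by
              rw [Matrix.det_succ_row_zero, Fin.sum_univ_succ]
              simp only [Matrix.of_apply, hz0, mul_zero, zero_mul, Finset.sum_const_zero,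
                add_zero, Fin.val_zero, pow_zero, one_mul, hf0, hg0, h00, Fin.succAbove_zero]
              rfl
            rw [hdet]
            refine ih q (fun i => f i.succ) (fun j => g j.succ)
              (hf.comp Fin.strictMono_succ) (hg.comp Fin.strictMono_succ) ?_
            show q + ∑ i : Fin q, f i.succ ≤ N
            rw [Fin.sum_univ_succ, hf0] at hle
            omega
          · -- first row of the minor is zero
            have hdet : Matrix.det (Matrix.of fun i j : Fin (q+1) => r (f i) (g j)) = 0 := by
              refine Matrix.det_eq_zero_of_row_eq_zero 0 fun j => ?_
              show r (f 0) (g j) = 0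
              rw [hf0]
              refine hz 0 (g j) ?_
              have := hg.monotone (Fin.zero_le j)
              omega
            rw [hdet]
        · -- all rows are ≥ 1 : use the recurrence and Cauchy–Binet
          have hf1 : ∀ i, 1 ≤ f i := fun i =>
            le_trans (Nat.one_le_iff_ne_zero.mpr hf0) (hf.monotone (Fin.zero_le i))
          set Mb : ℕ := g (Fin.last q) + 2 with hMbdef
          have hMb : ∀ j : Fin (q+1), g j + 2 ≤ Mb := by
            intro j
            have := hg.monotone (Fin.le_last j)
            omega
          have hentry : (Matrix.of fun i j : Fin (q+1) => r (f i) (g j))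
              = Matrix.of fun i j : Fin (q+1) => ∑ m ∈ Finset.range Mb,
                  r (f i - 1) m * jacobiMatrix s t m (g j) := by
            funext i j
            show r (f i) (g j) = _
            conv_lhs => rw [show f i = (f i - 1) + 1 from (Nat.succ_pred_eq_of_pos (hf1 i)).symm]
            exact hsum (f i - 1) (g j) Mb (hMb j)
          rw [hentry]
          refine det_sum_mul_nonneg (q+1) Mb (fun i m => r (f i - 1) m)
            (fun m j => jacobiMatrix s t m (g j)) ?_ ?_
          · intro e he
            refine ih (q+1) (fun i => f i - 1) e
              (fun a b hab => Nat.sub_lt_sub_right (hf1 a) (hf hab)) he ?_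
            show q + 1 + ∑ i : Fin (q+1), (f i - 1) ≤ N
            have h1 : ∑ i : Fin (q+1), f i = (∑ i : Fin (q+1), (f i - 1)) + (q+1) := by
              have h2 : ∀ i : Fin (q+1), f i = (f i - 1) + 1 := fun i => by
                have := hf1 i
                omega
              calc ∑ i : Fin (q+1), f i = ∑ i : Fin (q+1), ((f i - 1) + 1) :=
                    Finset.sum_congr rfl fun i _ => h2 i
                _ = (∑ i : Fin (q+1), (f i - 1)) + (q+1) := by
                    rw [Finset.sum_add_distrib]
                    simp
            omega
          · intro e he
            exact hJ (q+1) e g he hg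
  intro n f g hf hg
  exact main (n + ∑ i, f i) n f g hf hg le_rfl
end

section
/- If the coefficient matrix J^{σ,τ} is totally positive and all t_k ≥ 0, then the Catalan-like numbers (r_{n,0})_{n≥0} form a Stieltjes moment sequence; equivalently, their Hankel matrix [r_{i+j,0}]_{i,j≥0} is totally positive. -/
open Finset in
lemma cauchy_binet_nonneg {n N : ℕ} (A : Fin n → Fin N → ℝ) (B : Fin N → Fin n → ℝ)
    (h : ∀ φ : Fin n → Fin N, StrictMono φ →
      0 ≤ Matrix.det (Matrix.of fun i j => A i (φ j)) *
          Matrix.det (Matrix.of fun i j => B (φ i) j)) :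
    0 ≤ Matrix.det (Matrix.of fun i j : Fin n => ∑ k, A i k * B k j) := by
  classical
  have step1 : Matrix.det (Matrix.of fun i j : Fin n => ∑ k, A i k * B k j)
      = ∑ p : Fin n → Fin N, (∏ j, B (p j) j) *
          Matrix.det (Matrix.of fun i j => A i (p j)) := by
    simp only [Matrix.det_apply', Matrix.of_apply, Finset.prod_univ_sum, Finset.mul_sum,
      Fintype.piFinset_univ]
    rw [Finset.sum_comm]
    refine Finset.sum_congr rfl fun p _ => ?_
    refine Finset.sum_congr rfl fun σ _ => ?_
    rw [Finset.prod_mul_distrib]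
    ring
  have step2 : ∑ p : Fin n → Fin N, (∏ j, B (p j) j) *
          Matrix.det (Matrix.of fun i j => A i (p j))
      = ∑ p ∈ Finset.univ.filter (fun p : Fin n → Fin N => Function.Injective p),
          (∏ j, B (p j) j) * Matrix.det (Matrix.of fun i j => A i (p j)) := by
    refine (Finset.sum_filter_of_ne fun p _ hne => ?_).symm
    by_contra hinj
    apply hne
    obtain ⟨i, j, hpij, hij⟩ : ∃ i j, p i = p j ∧ i ≠ j := by
      rw [Function.Injective] at hinj; push_neg at hinj
      obtain ⟨i, j, h1, h2⟩ := hinj; exact ⟨i, j, h1, h2⟩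
    have : Matrix.det (Matrix.of fun i j => A i (p j)) = 0 :=
      Matrix.det_zero_of_column_eq hij (fun k => by simp [hpij])
    rw [this, mul_zero]
  have step3 : ∑ p ∈ Finset.univ.filter (fun p : Fin n → Fin N => Function.Injective p),
      (∏ j, B (p j) j) * Matrix.det (Matrix.of fun i j => A i (p j))
    = ∑ q ∈ (Finset.univ.filter (fun φ : Fin n → Fin N => StrictMono φ)) ×ˢ
        (Finset.univ : Finset (Equiv.Perm (Fin n))),
      (∏ j, B (q.1 (q.2 j)) j) * Matrix.det (Matrix.of fun i j => A i (q.1 (q.2 j))) := by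
    refine (Finset.sum_bij (fun q _ => q.1 ∘ q.2) ?_ ?_ ?_ ?_).symm
    · rintro ⟨φ, σ⟩ hq
      simp only [Finset.mem_product, Finset.mem_filter, Finset.mem_univ, true_and] at hq ⊢
      exact (hq.1.injective).comp σ.injective
    · rintro ⟨φ₁, σ₁⟩ h₁ ⟨φ₂, σ₂⟩ h₂ heq
      simp only [Finset.mem_product, Finset.mem_filter, Finset.mem_univ, true_and] at h₁ h₂
      simp only at heq
      have himg : Finset.image (φ₁ ∘ σ₁) Finset.univ = Finset.image (φ₂ ∘ σ₂) Finset.univ := by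
        rw [heq]
      have himg1 : ∀ (φ : Fin n → Fin N) (σ : Equiv.Perm (Fin n)),
          Finset.image (φ ∘ σ) Finset.univ = Finset.image φ Finset.univ := by
        intro φ σ
        rw [← Finset.image_image]
        congr 1
        exact Finset.image_univ_equiv σ
      rw [himg1, himg1] at himg
      have hcard : (Finset.image φ₁ Finset.univ).card = n := by
        rw [Finset.card_image_of_injective _ h₁.1.injective, Finset.card_univ, Fintype.card_fin]
      have hφ1 : φ₁ = Finset.orderEmbOfFin _ hcard :=
        Finset.orderEmbOfFin_unique hcard (fun x => Finset.mem_image_of_mem _ (Finset.mem_univ x)) h₁.1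
      have hcard2 : (Finset.image φ₁ Finset.univ).card = n := hcard
      have hφ2 : φ₂ = Finset.orderEmbOfFin _ hcard := by
        refine Finset.orderEmbOfFin_unique hcard (fun x => ?_) h₂.1
        rw [himg]
        exact Finset.mem_image_of_mem _ (Finset.mem_univ x)
      have hφ : φ₁ = φ₂ := hφ1.trans hφ2.symm
      subst hφ
      have hσ : σ₁ = σ₂ := by
        apply Equiv.ext
        intro i
        exact h₁.1.injective (congrFun heq i)
      simp [hσ]
    · intro κ hκ
      simp only [Finset.mem_filter, Finset.mem_univ, true_and] at hκ
      set s : Finset (Fin N) := Finset.image κ Finset.univ with hs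
      have hcard : s.card = n := by
        rw [hs, Finset.card_image_of_injective _ hκ, Finset.card_univ, Fintype.card_fin]
      set φ : Fin n → Fin N := ⇑(s.orderEmbOfFin hcard) with hφ
      have hmem : ∀ i, κ i ∈ s := fun i => Finset.mem_image_of_mem _ (Finset.mem_univ i)
      set ψ : Fin n → Fin n := fun i => (s.orderIsoOfFin hcard).symm ⟨κ i, hmem i⟩ with hψ
      have hψinj : Function.Injective ψ := by
        intro a b hab
        have h2 : (⟨κ a, hmem a⟩ : {x // x ∈ s}) = ⟨κ b, hmem b⟩ := by
          have := congrArg (s.orderIsoOfFin hcard) hab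
          simpa only [hψ, OrderIso.apply_symm_apply] using this
        exact hκ (Subtype.ext_iff.mp h2)
      have hψbij : Function.Bijective ψ := (Finite.injective_iff_bijective).mp hψinj
      refine ⟨⟨φ, Equiv.ofBijective ψ hψbij⟩, ?_, ?_⟩
      · simp only [Finset.mem_product, Finset.mem_filter, Finset.mem_univ, true_and, and_true]
        exact (s.orderEmbOfFin hcard).strictMono
      · funext i
        show φ (ψ i) = κ i
        have : (φ (ψ i) : Fin N) = ((s.orderIsoOfFin hcard) (ψ i) : Fin N) :=
          (Finset.coe_orderIsoOfFin_apply s hcard (ψ i)).symm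
        rw [this, hψ]
        simp
    · intro q hq
      rfl
  have step4 : ∑ q ∈ (Finset.univ.filter (fun φ : Fin n → Fin N => StrictMono φ)) ×ˢ
        (Finset.univ : Finset (Equiv.Perm (Fin n))),
      (∏ j, B (q.1 (q.2 j)) j) * Matrix.det (Matrix.of fun i j => A i (q.1 (q.2 j)))
    = ∑ φ ∈ Finset.univ.filter (fun φ : Fin n → Fin N => StrictMono φ),
        Matrix.det (Matrix.of fun i j => B (φ i) j) *
        Matrix.det (Matrix.of fun i j => A i (φ j)) := by
    rw [Finset.sum_product]
    refine Finset.sum_congr rfl fun φ _ => ?_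
    have hperm : ∀ σ : Equiv.Perm (Fin n),
        Matrix.det (Matrix.of fun i j => A i (φ (σ j)))
        = Equiv.Perm.sign σ * Matrix.det (Matrix.of fun i j => A i (φ j)) := by
      intro σ
      have : (Matrix.of fun i j => A i (φ (σ j)))
          = (Matrix.of fun i j => A i (φ j)).submatrix id σ := rfl
      rw [this, Matrix.det_permute']
    simp only [hperm]
    rw [Matrix.det_apply' (Matrix.of fun i j => B (φ i) j)]
    rw [Finset.sum_mul]
    refine Finset.sum_congr rfl fun σ _ => ?_
    simp only [Matrix.of_apply]
    ring
  rw [step1, step2, step3, step4]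
  refine Finset.sum_nonneg fun φ hφ => ?_
  simp only [Finset.mem_filter, Finset.mem_univ, true_and] at hφ
  rw [mul_comm]
  exact h φ hφ

open Finset in
lemma tp_rec (Jm : ℕ → ℕ → ℝ)
    (hJm : ∀ (n : ℕ) (f g : Fin n → ℕ), StrictMono f → StrictMono g →
      0 ≤ Matrix.det (Matrix.of fun i j : Fin n => Jm (f i) (g j)))
    (u : ℕ → ℕ → ℝ) (hu00 : u 0 0 = 1)
    (huz : ∀ n k, n < k → u n k = 0)
    (hurec : ∀ n k K, n + 2 ≤ K →
      u (n + 1) k = ∑ j ∈ Finset.range K, u n j * Jm j k) :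
    ∀ (n : ℕ) (f g : Fin n → ℕ), StrictMono f → StrictMono g →
      0 ≤ Matrix.det (Matrix.of fun i j : Fin n => u (f i) (g j)) := by
  suffices H : ∀ (m n : ℕ) (f g : Fin n → ℕ), n + ∑ i, f i ≤ m → StrictMono f → StrictMono g →
      0 ≤ Matrix.det (Matrix.of fun i j : Fin n => u (f i) (g j)) from
    fun n f g hf hg => H (n + ∑ i, f i) n f g le_rfl hf hg
  intro m
  induction m with
  | zero =>
    intro n f g hle hf hg
    have hn : n = 0 := by omega
    subst hn
    simp [Matrix.det_isEmpty]
  | succ m ih =>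
    intro n f g hle hf hg
    match n, f, g, hle, hf, hg with
    | 0, f, g, hle, hf, hg => simp [Matrix.det_isEmpty]
    | Nat.succ n, f, g, hle, hf, hg =>
      by_cases h0 : f 0 = 0
      · by_cases hg0 : g 0 = 0
        · -- expand along first row
          rw [Matrix.det_succ_row_zero]
          have hsum : ∀ j : Fin (n+1), j ≠ 0 →
              (-1 : ℝ) ^ (j : ℕ) * (Matrix.of fun i j : Fin (n+1) => u (f i) (g j)) 0 j *
                Matrix.det ((Matrix.of fun i j : Fin (n+1) => u (f i) (g j)).submatrix
                  Fin.succ (Fin.succAbove j)) = 0 := by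
            intro j hj
            have hgj : 0 < g j := by
              have : g 0 < g j := hg (by
                exact lt_of_le_of_ne (Fin.zero_le j) (Ne.symm hj))
              omega
            have : u (f 0) (g j) = 0 := by
              rw [h0]; exact huz 0 (g j) hgj
            simp [this]
          rw [Finset.sum_eq_single (0 : Fin (n+1)) (fun b _ hb => hsum b hb)
            (fun h => absurd (Finset.mem_univ _) h)]
          have e1 : (Matrix.of fun i j : Fin (n+1) => u (f i) (g j)) 0 0 = 1 := by
            simp only [Matrix.of_apply]; rw [h0, hg0]; exact hu00
          rw [e1, Fin.val_zero, pow_zero, one_mul, one_mul, Fin.succAbove_zero]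
          have hdet : ((Matrix.of fun i j : Fin (n+1) => u (f i) (g j)).submatrix
              Fin.succ Fin.succ) = Matrix.of fun i j : Fin n => u (f i.succ) (g j.succ) := rfl
          rw [hdet]
          refine ih n (fun i => f i.succ) (fun j => g j.succ) ?_
            (hf.comp Fin.strictMono_succ) (hg.comp Fin.strictMono_succ)
          have hle' : n + ∑ i : Fin n, f i.succ ≤ m := by
            rw [Fin.sum_univ_succ] at hle
            omega
          exact hle'
        · refine le_of_eq (Matrix.det_eq_zero_of_row_eq_zero 0 fun j => ?_).symm
          have hgj : 0 < g j := by
            have : g 0 ≤ g j := hg.monotone (Fin.zero_le j)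
            omega
          simp only [Matrix.of_apply, h0]
          exact huz 0 (g j) hgj
      · -- all rows have index ≥ 1
        have hf1 : ∀ i, 1 ≤ f i := by
          intro i
          have : f 0 ≤ f i := hf.monotone (Fin.zero_le i)
          omega
        set f' : Fin (n+1) → ℕ := fun i => f i - 1 with hf'
        set K : ℕ := f (Fin.last n) + 1 with hKdef
        have hK : ∀ i : Fin (n+1), f' i + 2 ≤ K := by
          intro i
          have h1 : f i ≤ f (Fin.last n) := hf.monotone (Fin.le_last i)
          have := hf1 i
          simp only [hf']
          omega
        have hM : (Matrix.of fun i j : Fin (n+1) => u (f i) (g j))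
            = Matrix.of fun i j : Fin (n+1) =>
                ∑ k : Fin K, u (f' i) (k : ℕ) * Jm (k : ℕ) (g j) := by
          ext i j
          simp only [Matrix.of_apply]
          have : f i = f' i + 1 := by have := hf1 i; simp only [hf']; omega
          rw [this, hurec (f' i) (g j) K (hK i), Finset.sum_range]
        rw [hM]
        refine cauchy_binet_nonneg _ _ fun φ hφ => mul_nonneg ?_ ?_
        · refine ih (n+1) f' (fun j => (φ j : ℕ)) ?_ ?_ ?_
          · have hsf : ∑ i : Fin (n+1), f i = (∑ i : Fin (n+1), f' i) + (n+1) := by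
              have h1 : ∑ i : Fin (n+1), f i = ∑ i : Fin (n+1), (f' i + 1) :=
                Finset.sum_congr rfl fun i _ => by have := hf1 i; simp only [hf']; omega
              rw [h1, Finset.sum_add_distrib]
              simp
            have hle2 : (n+1) + ∑ i : Fin (n+1), f i ≤ m + 1 := hle
            omega
          · intro a b hab
            have h1 := hf hab
            have := hf1 a
            simp only [hf']
            omega
          · intro a b hab
            exact_mod_cast hφ hab
        · exact hJm (n+1) (fun i => (φ i : ℕ)) g (fun a b hab => by exact_mod_cast hφ hab) hg

lemma jacobi_apply (s t : ℕ → ℝ) (i j : ℕ) :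
    jacobiMatrix s t i j =
      if i = j then s i else if j = i + 1 then 1 else if i = j + 1 then t i else 0 := rfl

open Finset in
lemma jsum0 (s t : ℕ → ℝ) (v : ℕ → ℝ) (n : ℕ) (hv : ∀ j, n < j → v j = 0)
    (K : ℕ) (hK : n + 2 ≤ K) :
    ∑ j ∈ Finset.range K, v j * jacobiMatrix s t j 0 = s 0 * v 0 + t 1 * v 1 := by
  have hsplit : ∀ j, v j * jacobiMatrix s t j 0 =
      (if j = 0 then s 0 * v 0 else 0) + (if j = 1 then t 1 * v 1 else 0) := by
    intro j
    rw [jacobi_apply]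
    split_ifs <;> first | contradiction | (exfalso; omega) | (subst_vars; ring) | ring
  simp only [hsplit]
  rw [Finset.sum_add_distrib, Finset.sum_ite_eq' (Finset.range K) 0 (fun _ => s 0 * v 0),
    Finset.sum_ite_eq' (Finset.range K) 1 (fun _ => t 1 * v 1)]
  rw [if_pos (Finset.mem_range.mpr (by omega)), if_pos (Finset.mem_range.mpr (by omega))]

open Finset in
lemma jsumS (s t : ℕ → ℝ) (v : ℕ → ℝ) (n : ℕ) (hv : ∀ j, n < j → v j = 0)
    (K k : ℕ) (hK : n + 2 ≤ K) :
    ∑ j ∈ Finset.range K, v j * jacobiMatrix s t j (k + 1)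
      = v k + s (k + 1) * v (k + 1) + t (k + 2) * v (k + 2) := by
  have hsplit : ∀ j, v j * jacobiMatrix s t j (k + 1) =
      (if j = k then v k else 0) + (if j = k + 1 then s (k + 1) * v (k + 1) else 0)
        + (if j = k + 2 then t (k + 2) * v (k + 2) else 0) := by
    intro j
    rw [jacobi_apply]
    split_ifs <;> first | contradiction | (exfalso; omega) | (subst_vars; ring) | ring
  simp only [hsplit]
  rw [Finset.sum_add_distrib, Finset.sum_add_distrib,
    Finset.sum_ite_eq' (Finset.range K) k (fun _ => v k),
    Finset.sum_ite_eq' (Finset.range K) (k + 1) (fun _ => s (k + 1) * v (k + 1)),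
    Finset.sum_ite_eq' (Finset.range K) (k + 2) (fun _ => t (k + 2) * v (k + 2))]
  have e1 : (if k ∈ Finset.range K then v k else 0) = v k := by
    split_ifs with h
    · rfl
    · rw [hv k (by rw [Finset.mem_range] at h; omega)]
  have e2 : (if k + 1 ∈ Finset.range K then s (k + 1) * v (k + 1) else 0)
      = s (k + 1) * v (k + 1) := by
    split_ifs with h
    · rfl
    · rw [hv (k + 1) (by rw [Finset.mem_range] at h; omega), mul_zero]
  have e3 : (if k + 2 ∈ Finset.range K then t (k + 2) * v (k + 2) else 0)
      = t (k + 2) * v (k + 2) := by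
    split_ifs with h
    · rfl
    · rw [hv (k + 2) (by rw [Finset.mem_range] at h; omega), mul_zero]
  rw [e1, e2, e3]

/-- The dual recursive matrix, whose `n`-th row is `J^n` applied to `e₀` (i.e. `(J^n)_{k,0}`). -/
noncomputable def rDual (s t : ℕ → ℝ) : ℕ → ℕ → ℝ
  | 0, k => if k = 0 then 1 else 0
  | (n + 1), k => ∑ j ∈ Finset.range (n + 1), rDual s t n j * jacobiMatrix s t k j

lemma rDual_vanish (s t : ℕ → ℝ) : ∀ n k, n < k → rDual s t n k = 0 := by
  intro n
  induction n with
  | zero => intro k hk; simp [rDual]; omega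
  | succ n ih =>
    intro k hk
    rw [rDual]
    refine Finset.sum_eq_zero fun j hj => ?_
    rw [Finset.mem_range] at hj
    have hJ : jacobiMatrix s t k j = 0 := by
      rw [jacobi_apply]
      split_ifs <;> first | omega | rfl
    rw [hJ, mul_zero]

open Finset in
lemma rDual_rec (s t : ℕ → ℝ) (n k K : ℕ) (hK : n + 2 ≤ K) :
    rDual s t (n + 1) k = ∑ j ∈ Finset.range K, rDual s t n j * jacobiMatrix s t k j := by
  rw [rDual]
  refine Finset.sum_subset (Finset.range_subset_range.mpr (by omega)) fun x _ hx => ?_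
  rw [Finset.mem_range, not_lt] at hx
  rw [rDual_vanish s t n x (by omega), zero_mul]

theorem stmt_7 (s t : ℕ → ℝ) (hs : ∀ k, 0 ≤ s k) (ht : ∀ k, 1 ≤ k → 0 ≤ t k)
    (r : ℕ → ℕ → ℝ)
    (h00 : r 0 0 = 1)
    (hz : ∀ n k : ℕ, n < k → r n k = 0)
    (hrec0 : ∀ n : ℕ, r (n + 1) 0 = s 0 * r n 0 + t 1 * r n 1)
    (hrec : ∀ n k : ℕ, r (n + 1) (k + 1) =
      r n k + s (k + 1) * r n (k + 1) + t (k + 2) * r n (k + 2))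
    (hJ : TotallyPositive (jacobiMatrix s t)) :
    TotallyPositive (fun i j => r (i + j) 0) := by
  have hrecR : ∀ n k K, n + 2 ≤ K →
      r (n + 1) k = ∑ j ∈ Finset.range K, r n j * jacobiMatrix s t j k := by
    intro n k K hK
    match k with
    | 0 => rw [jsum0 s t (r n) n (fun j hj => hz n j hj) K hK, hrec0]
    | (k + 1) => rw [jsumS s t (r n) n (fun j hj => hz n j hj) K k hK, hrec]
  have hJ' : ∀ (n : ℕ) (f g : Fin n → ℕ), StrictMono f → StrictMono g →
      0 ≤ Matrix.det (Matrix.of fun i j : Fin n => jacobiMatrix s t (f i) (g j)) := hJ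
  have hJ'' : ∀ (n : ℕ) (f g : Fin n → ℕ), StrictMono f → StrictMono g →
      0 ≤ Matrix.det (Matrix.of fun i j : Fin n =>
        (fun a b => jacobiMatrix s t b a) (f i) (g j)) := by
    intro n f g hfm hgm
    have e : (Matrix.of fun i j : Fin n => jacobiMatrix s t (g j) (f i))
        = (Matrix.of fun i j : Fin n => jacobiMatrix s t (g i) (f j)).transpose := by
      ext i j; rfl
    show 0 ≤ Matrix.det (Matrix.of fun i j : Fin n => jacobiMatrix s t (g j) (f i))
    rw [e, Matrix.det_transpose]
    exact hJ n g f hgm hfm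
  have tpR := tp_rec (jacobiMatrix s t) hJ' r h00 hz hrecR
  have tpR2 := tp_rec (fun a b => jacobiMatrix s t b a) hJ'' (rDual s t)
    (by simp [rDual]) (rDual_vanish s t) (fun n k K hK => rDual_rec s t n k K hK)
  have hankel : ∀ n m, r (m + n) 0 = ∑ k ∈ Finset.range (n + 1), r m k * rDual s t n k := by
    intro n
    induction n with
    | zero => intro m; simp [rDual]
    | succ n ih =>
      intro m
      have h1 : m + (n + 1) = (m + 1) + n := by omega
      rw [h1, ih (m + 1)]
      calc ∑ k ∈ Finset.range (n + 1), r (m + 1) k * rDual s t n k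
          = ∑ k ∈ Finset.range (n + 1),
              (∑ j ∈ Finset.range (m + n + 2), r m j * jacobiMatrix s t j k) * rDual s t n k := by
            refine Finset.sum_congr rfl fun k _ => ?_
            rw [hrecR m k (m + n + 2) (by omega)]
        _ = ∑ j ∈ Finset.range (m + n + 2), r m j *
              ∑ k ∈ Finset.range (n + 1), rDual s t n k * jacobiMatrix s t j k := by
            simp only [Finset.sum_mul]
            rw [Finset.sum_comm]
            refine Finset.sum_congr rfl fun j _ => ?_
            rw [Finset.mul_sum]
            refine Finset.sum_congr rfl fun k _ => ?_
            ring
        _ = ∑ j ∈ Finset.range (m + n + 2), r m j * rDual s t (n + 1) j := by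
            refine Finset.sum_congr rfl fun j _ => ?_
            rw [rDual]
        _ = ∑ k ∈ Finset.range (n + 2), r m k * rDual s t (n + 1) k := by
            refine (Finset.sum_subset (Finset.range_subset_range.mpr (by omega)) fun x _ hx => ?_).symm
            rw [Finset.mem_range, not_lt] at hx
            rw [rDual_vanish s t (n + 1) x (by omega), mul_zero]
  intro n f g hf hg
  match n, f, g, hf, hg with
  | 0, f, g, hf, hg => simp [Matrix.det_isEmpty]
  | (n + 1), f, g, hf, hg =>
    set K := g (Fin.last n) + 1 with hKdef
    have hgK : ∀ j : Fin (n + 1), g j + 1 ≤ K := fun j => by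
      have := hg.monotone (Fin.le_last j); omega
    have hentry : ∀ i j : Fin (n + 1), r (f i + g j) 0
        = ∑ k : Fin K, r (f i) (k : ℕ) * rDual s t (g j) (k : ℕ) := by
      intro i j
      rw [hankel (g j) (f i)]
      rw [Finset.sum_subset (Finset.range_subset_range.mpr (hgK j)) (fun x _ hx => by
        rw [Finset.mem_range, not_lt] at hx
        rw [rDual_vanish s t (g j) x (by omega), mul_zero])]
      rw [Finset.sum_range]
    have hM : (Matrix.of fun i j : Fin (n + 1) => r (f i + g j) 0)
        = Matrix.of fun i j : Fin (n + 1) =>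
            ∑ k : Fin K, r (f i) (k : ℕ) * rDual s t (g j) (k : ℕ) := by
      ext i j
      exact hentry i j
    show 0 ≤ Matrix.det (Matrix.of fun i j : Fin (n + 1) => r (f i + g j) 0)
    rw [hM]
    refine cauchy_binet_nonneg (fun i k => r (f i) (k : ℕ))
      (fun k j => rDual s t (g j) (k : ℕ)) fun φ hφ => mul_nonneg ?_ ?_
    · exact tpR (n + 1) f (fun j => (φ j : ℕ)) hf (fun a b hab => by exact_mod_cast hφ hab)
    · have e : (Matrix.of fun i j : Fin (n + 1) => rDual s t (g j) ((φ i : ℕ)))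
          = (Matrix.of fun i j : Fin (n + 1) => rDual s t (g i) ((φ j : ℕ))).transpose := by
        ext i j; rfl
      show 0 ≤ Matrix.det (Matrix.of fun i j : Fin (n + 1) => rDual s t (g j) ((φ i : ℕ)))
      rw [e, Matrix.det_transpose]
      exact tpR2 (n + 1) g (fun j => (φ j : ℕ)) hg (fun a b hab => by exact_mod_cast hφ hab)
end

section
/- If s_0 ≥ 1 and s_k ≥ t_k + 1 for all k ≥ 1 (with all s_k, t_k nonnegative), then the tridiagonal matrix J^{σ,τ} is totally positive. -/
/-- A strictly monotone permutation of `Fin n` is the identity. -/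
lemma perm_strictMono_eq_one {n : ℕ} (σ : Equiv.Perm (Fin n)) (h : StrictMono ⇑σ) : σ = 1 := by
  have inst : WellFoundedLT (Fin n) := inferInstance
  have h2 : StrictMono ⇑σ⁻¹ := by
    intro a b hab
    rcases lt_trichotomy (σ⁻¹ a) (σ⁻¹ b) with hc|hc|hc
    · exact hc
    · exact absurd (congrArg σ hc) (by simp; exact hab.ne)
    · have := h hc
      simp only [Equiv.Perm.coe_inv, Equiv.apply_symm_apply] at this
      exact absurd hab (not_lt.mpr this.le)
  ext i
  have h1 := StrictMono.le_apply h (x := i)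
  have h3 := StrictMono.le_apply h2 (x := σ i)
  simp only [Equiv.Perm.coe_inv, Equiv.symm_apply_apply] at h3
  simp [le_antisymm h3 h1]

/-- Core: a permutation squeezed between two strictly monotone sequences is the identity. -/
lemma perm_squeeze_eq_one {n : ℕ} (σ : Equiv.Perm (Fin n)) (f g : Fin n → ℕ)
    (hf : StrictMono f) (hg : StrictMono g)
    (h1 : ∀ i, f (σ i) ≤ g i) (h2 : ∀ i, g i ≤ f (σ i) + 1) : σ = 1 := by
  apply perm_strictMono_eq_one
  intro i i' hii'
  have hgi : g i + 1 ≤ g i' := hg hii'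
  have hle : f (σ i) ≤ f (σ i') := by
    have := h1 i
    have := h2 i'
    omega
  have hne : σ i ≠ σ i' := fun h => (Nat.lt_irrefl i (by simp [σ.injective h] at hii'))
  exact hf.lt_iff_lt.mp (lt_of_le_of_ne hle (fun h => hne (hf.injective h)))

/-- Minors of a nonnegative upper-bidiagonal matrix are nonnegative. -/
lemma det_upper_bidiag_nonneg {n : ℕ} (M : ℕ → ℕ → ℝ)
    (h0 : ∀ a b, 0 ≤ M a b) (hsupp : ∀ a b, M a b ≠ 0 → b = a ∨ b = a + 1)
    (f g : Fin n → ℕ) (hf : StrictMono f) (hg : StrictMono g) :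
    0 ≤ Matrix.det (Matrix.of fun i j : Fin n => M (f i) (g j)) := by
  rw [Matrix.det_apply]
  apply Finset.sum_nonneg
  intro σ _
  by_cases hσ : σ = 1
  · subst hσ
    simp only [Equiv.Perm.sign_one, one_smul, Equiv.Perm.one_apply, Matrix.of_apply]
    exact Finset.prod_nonneg fun i _ => h0 _ _
  · have hz : ∏ i, (Matrix.of fun i j : Fin n => M (f i) (g j)) (σ i) i = 0 := by
      by_contra hne
      apply hσ
      have hfac : ∀ i : Fin n, M (f (σ i)) (g i) ≠ 0 := by
        intro i hi
        exact hne (Finset.prod_eq_zero (Finset.mem_univ i) hi)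
      refine perm_squeeze_eq_one σ f g hf hg (fun i => ?_) (fun i => ?_) <;>
        rcases hsupp _ _ (hfac i) with h | h <;> omega
    rw [hz, smul_zero]

/-- Minors of a nonnegative lower-bidiagonal matrix are nonnegative. -/
lemma det_lower_bidiag_nonneg {n : ℕ} (M : ℕ → ℕ → ℝ)
    (h0 : ∀ a b, 0 ≤ M a b) (hsupp : ∀ a b, M a b ≠ 0 → b = a ∨ a = b + 1)
    (f g : Fin n → ℕ) (hf : StrictMono f) (hg : StrictMono g) :
    0 ≤ Matrix.det (Matrix.of fun i j : Fin n => M (f i) (g j)) := by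
  rw [Matrix.det_apply]
  apply Finset.sum_nonneg
  intro σ _
  by_cases hσ : σ = 1
  · subst hσ
    simp only [Equiv.Perm.sign_one, one_smul, Equiv.Perm.one_apply, Matrix.of_apply]
    exact Finset.prod_nonneg fun i _ => h0 _ _
  · have hz : ∏ i, (Matrix.of fun i j : Fin n => M (f i) (g j)) (σ i) i = 0 := by
      by_contra hne
      apply hσ
      have hfac : ∀ i : Fin n, M (f (σ i)) (g i) ≠ 0 := by
        intro i hi
        exact hne (Finset.prod_eq_zero (Finset.mem_univ i) hi)
      have hinv : σ⁻¹ = 1 := by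
        refine perm_squeeze_eq_one σ⁻¹ g f hg hf (fun i => ?_) (fun i => ?_) <;>
          rcases hsupp _ _ (hfac (σ⁻¹ i)) with h | h <;>
          simp only [Equiv.Perm.coe_inv, Equiv.apply_symm_apply] at h ⊢ <;> omega
      simpa using congrArg Inv.inv hinv
    rw [hz, smul_zero]

noncomputable def dseq (s t : ℕ → ℝ) : ℕ → ℝ
  | 0 => s 0
  | (k+1) => s (k+1) - t (k+1) / dseq s t k

noncomputable def Lmat (s t : ℕ → ℝ) (i j : ℕ) : ℝ :=
  if i = j then 1 else if i = j + 1 then t i / dseq s t j else 0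

noncomputable def Umat (s t : ℕ → ℝ) (i j : ℕ) : ℝ :=
  if i = j then dseq s t i else if j = i + 1 then 1 else 0

section facts
variable {s t : ℕ → ℝ} (ht : ∀ k, 1 ≤ k → 0 ≤ t k)
    (hs0 : 1 ≤ s 0) (hst : ∀ k, 1 ≤ k → t k + 1 ≤ s k)

include ht hs0 hst in
lemma dseq_ge_one : ∀ k, 1 ≤ dseq s t k := by
  intro k
  induction k with
  | zero => simpa [dseq] using hs0
  | succ k ih =>
    have hd : (0:ℝ) < dseq s t k := lt_of_lt_of_le one_pos ih
    have htk : 0 ≤ t (k+1) := ht (k+1) (Nat.le_add_left 1 k)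
    have hdiv : t (k+1) / dseq s t k ≤ t (k+1) := by
      calc t (k+1) / dseq s t k ≤ t (k+1) / 1 := by
            apply div_le_div_of_nonneg_left htk one_pos ih
        _ = t (k+1) := div_one _
    have := hst (k+1) (Nat.le_add_left 1 k)
    simp only [dseq]
    linarith

include ht hs0 hst in
lemma Lmat_nonneg : ∀ a b, 0 ≤ Lmat s t a b := by
  intro a b
  unfold Lmat
  split_ifs with h1 h2
  · exact zero_le_one
  · have hd : (0:ℝ) < dseq s t b := lt_of_lt_of_le one_pos (dseq_ge_one ht hs0 hst b)
    exact div_nonneg (ht a (by omega)) hd.le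
  · exact le_refl 0

include ht hs0 hst in
lemma Umat_nonneg : ∀ a b, 0 ≤ Umat s t a b := by
  intro a b
  unfold Umat
  split_ifs with h1 h2
  · exact le_trans zero_le_one (dseq_ge_one ht hs0 hst a)
  · exact zero_le_one
  · exact le_refl 0

lemma Lmat_supp : ∀ a b, Lmat s t a b ≠ 0 → b = a ∨ a = b + 1 := by
  intro a b h
  unfold Lmat at h
  split_ifs at h with h1 h2
  · exact Or.inl h1.symm
  · exact Or.inr h2
  · exact absurd rfl h

lemma Umat_supp : ∀ a b, Umat s t a b ≠ 0 → b = a ∨ b = a + 1 := by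
  intro a b h
  unfold Umat at h
  split_ifs at h with h1 h2
  · exact Or.inl h1.symm
  · exact Or.inr h2
  · exact absurd rfl h

include ht hs0 hst in
/-- The entrywise LU factorization identity. -/
lemma jacobi_eq_LU {m : ℕ} (a b : ℕ) (ha : a < m) :
    jacobiMatrix s t a b = ∑ k : Fin m, Lmat s t a k * Umat s t k b := by
  have hd : ∀ j, (0:ℝ) < dseq s t j := fun j => lt_of_lt_of_le one_pos (dseq_ge_one ht hs0 hst j)
  match a with
  | 0 =>
    rw [Finset.sum_eq_single (⟨0, ha⟩ : Fin m)]
    · simp only [Lmat, Umat, jacobiMatrix, dseq]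
      split_ifs with h1 h2 <;> simp_all <;> omega
    · intro k _ hk
      have : (k : ℕ) ≠ 0 := fun h => hk (Fin.ext h)
      have hz : Lmat s t 0 k = 0 := by
        simp only [Lmat]
        split_ifs with h1 h2
        · omega
        · exact h2.elim
        · rfl
      rw [hz, zero_mul]
    · intro h; exact absurd (Finset.mem_univ _) h
  | (c+1) =>
    have hc : c < m := by omega
    have hne : (⟨c, hc⟩ : Fin m) ≠ ⟨c+1, ha⟩ := by simp
    have hsub : ({⟨c, hc⟩, ⟨c+1, ha⟩} : Finset (Fin m)) ⊆ Finset.univ := Finset.subset_univ _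
    rw [← Finset.sum_subset hsub (by
      intro k _ hk
      simp only [Finset.mem_insert, Finset.mem_singleton] at hk
      push_neg at hk
      have h1 : (k:ℕ) ≠ c := fun h => hk.1 (Fin.ext h)
      have h2 : (k:ℕ) ≠ c+1 := fun h => hk.2 (Fin.ext h)
      simp only [Lmat]
      split_ifs with hh1 hh2 <;> first | omega | ring)]
    rw [Finset.sum_pair hne]
    simp only [Lmat, Umat, jacobiMatrix]
    have hdc := (hd c).ne'
    rcases Nat.lt_trichotomy b c with hb | rfl | hb
    · split_ifs <;> first | omega | ring1 | (simp only [dseq, div_eq_mul_inv]; ring1) | (field_simp; done) | (field_simp; ring1; done) | (simp only [dseq]; field_simp; done) | (simp only [dseq]; field_simp; ring1; done)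
    · split_ifs <;> first | omega | ring1 | (simp only [dseq, div_eq_mul_inv]; ring1) | (field_simp; done) | (field_simp; ring1; done) | (simp only [dseq]; field_simp; done) | (simp only [dseq]; field_simp; ring1; done)
    · rcases Nat.eq_or_lt_of_le hb with rfl | hb2
      · split_ifs <;> first | omega | ring1 | (simp only [dseq, div_eq_mul_inv]; ring1) | (field_simp; done) | (field_simp; ring1; done) | (simp only [dseq]; field_simp; done) | (simp only [dseq]; field_simp; ring1; done)
      · rcases Nat.eq_or_lt_of_le hb2 with hb3 | hb3
        · have : b = c + 2 := by omega
          subst this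
          split_ifs <;> first | omega | ring1 | (simp only [dseq, div_eq_mul_inv]; ring1) | (field_simp; done) | (field_simp; ring1; done) | (simp only [dseq]; field_simp; done) | (simp only [dseq]; field_simp; ring1; done)
        · split_ifs <;> first | omega | ring1 | (simp only [dseq, div_eq_mul_inv]; ring1) | (field_simp; done) | (field_simp; ring1; done) | (simp only [dseq]; field_simp; done) | (simp only [dseq]; field_simp; ring1; done)

end facts

theorem stmt_8 (s t : ℕ → ℝ) (hs : ∀ k, 0 ≤ s k) (ht : ∀ k, 1 ≤ k → 0 ≤ t k)
    (hs0 : 1 ≤ s 0) (hst : ∀ k, 1 ≤ k → t k + 1 ≤ s k) :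
    TotallyPositive (jacobiMatrix s t) := by
  intro n f g hf hg
  classical
  set m : ℕ := 2 + Finset.univ.sup (fun i : Fin n => max (f i) (g i)) with hm
  have hfm : ∀ i, f i < m := by
    intro i
    have h1 : max (f i) (g i) ≤ Finset.univ.sup (fun i : Fin n => max (f i) (g i)) :=
      Finset.le_sup (f := fun i : Fin n => max (f i) (g i)) (Finset.mem_univ i)
    have := le_max_left (f i) (g i)
    omega
  set A : Matrix (Fin n) (Fin m) ℝ := Matrix.of fun i k => Lmat s t (f i) (k : ℕ) with hA
  set B : Matrix (Fin m) (Fin n) ℝ := Matrix.of fun k j => Umat s t (k : ℕ) (g j) with hB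
  have hAB : (Matrix.of fun i j : Fin n => jacobiMatrix s t (f i) (g j)) = A * B := by
    ext i j
    simp only [Matrix.mul_apply, Matrix.of_apply, hA, hB]
    exact jacobi_eq_LU ht hs0 hst (f i) (g j) (hfm i)
  rw [hAB]
  have hdet : (A * B).det =
      ∑ φ : Fin n → Fin m, (∏ i, A i (φ i)) • Matrix.det (Matrix.of fun i j => B (φ i) j) := by
    have h1 : (A * B).det = Matrix.detRowAlternating (fun i k => ∑ j : Fin m, (A i j • B j) k) := by
      congr 1
    have h2 : (fun i k => ∑ j : Fin m, (A i j • B j) k) = (fun i => ∑ j : Fin m, A i j • B j) := by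
      funext i
      ext k
      rw [Finset.sum_apply]
    have h3 := (Matrix.detRowAlternating (R := ℝ) (n := Fin n)).toMultilinearMap.map_sum
      (g := fun i (j : Fin m) => A i j • B j)
    have h4 : ∀ φ : Fin n → Fin m,
        (Matrix.detRowAlternating (R := ℝ) (n := Fin n)).toMultilinearMap
          (fun i => A i (φ i) • B (φ i)) =
        (∏ i, A i (φ i)) • (Matrix.detRowAlternating (R := ℝ) (n := Fin n)).toMultilinearMap
          (fun i => B (φ i)) :=
      fun φ => MultilinearMap.map_smul_univ _ _ _
    simp only [AlternatingMap.coe_multilinearMap] at h3 h4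
    rw [h1, h2, h3]
    exact Finset.sum_congr rfl fun φ _ => h4 φ
  rw [hdet]
  apply Finset.sum_nonneg
  intro φ _
  by_cases hz : ∀ i, Lmat s t (f i) ((φ i : ℕ)) ≠ 0
  · by_cases hinj : Function.Injective φ
    · have hmono : StrictMono (fun i => ((φ i : ℕ))) := by
        intro i i' hii'
        show (φ i : ℕ) < (φ i' : ℕ)
        have hff : f i < f i' := hf hii'
        have hne : (φ i : ℕ) ≠ (φ i' : ℕ) := fun h => (ne_of_lt hii') (hinj (Fin.ext h))
        have h := Lmat_supp _ _ (hz i)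
        have h' := Lmat_supp _ _ (hz i')
        omega
      apply smul_nonneg
      · exact Finset.prod_nonneg fun i _ => Lmat_nonneg ht hs0 hst _ _
      · exact det_upper_bidiag_nonneg (Umat s t) (Umat_nonneg ht hs0 hst) Umat_supp
          (fun i => (φ i : ℕ)) g hmono hg
    · obtain ⟨i, i', heq, hne⟩ : ∃ i i', φ i = φ i' ∧ i ≠ i' := by
        simp only [Function.Injective, not_forall] at hinj
        obtain ⟨i, i', h1, h2⟩ := hinj
        exact ⟨i, i', h1, h2⟩
      have hrow : Matrix.det (Matrix.of fun i j => B (φ i) j) = 0 := by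
        apply Matrix.det_zero_of_row_eq hne
        funext j
        simp [heq]
      rw [hrow, smul_zero]
  · push_neg at hz
    obtain ⟨i, hi0⟩ := hz
    have hprod : ∏ i, A i (φ i) = 0 :=
      Finset.prod_eq_zero (Finset.mem_univ i) (by simpa [hA] using hi0)
    rw [hprod, zero_smul]
end

section
/- For nonnegative reals p, q, s, t, the tridiagonal matrix J(p,q;s,t) (first row (p,1,0,...), first column (p,q,0,...), all other diagonal entries s, superdiagonal entries 1, subdiagonal entries t) is totally positive if and only if s² ≥ 4t and p·(s + √(s² − 4t))/2 ≥ q. -/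
/-- The tridiagonal matrix `J(p,q;s,t)`: `(0,0)`-entry `p`, `(1,0)`-entry `q`,
diagonal entries `s` from row 1 on, subdiagonal entries `t` from row 2 on,
superdiagonal entries `1`. -/
def jacobiPQST (p q s t : ℝ) : ℕ → ℕ → ℝ := fun i j =>
  if i = j then (if i = 0 then p else s)
  else if i = j + 1 then (if i = 1 then q else t)
  else if j = i + 1 then 1 else 0

namespace StmtNine

open Matrix

/-- General tridiagonal matrix with diagonal `a`, subdiagonal `b`, superdiagonal `1`. -/
def triMat (a b : ℕ → ℝ) (n : ℕ) : Matrix (Fin n) (Fin n) ℝ :=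
  Matrix.of fun i j => if (i : ℕ) = j then a i else if (i : ℕ) = (j : ℕ) + 1 then b j
    else if (j : ℕ) = (i : ℕ) + 1 then 1 else 0

/-- Minors of the Toeplitz tridiagonal (Chebyshev-like sequence). -/
def dseq (s t : ℝ) : ℕ → ℝ
  | 0 => 1
  | 1 => s
  | (n + 2) => s * dseq s t (n + 1) - t * dseq s t n

/-- Leading principal minors of `J(p,q;s,t)`. -/
def Dseq (p q s t : ℝ) : ℕ → ℝ
  | 0 => 1
  | 1 => p
  | (n + 2) => p * dseq s t (n + 1) - q * dseq s t n

/-- Auxiliary normalized sequence used when `s^2 < 4t`. -/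
def eseq (c : ℝ) : ℕ → ℝ
  | 0 => 1
  | 1 => c
  | (n + 2) => c * eseq c (n + 1) - eseq c n

lemma triMat_det_rec (a b : ℕ → ℝ) (n : ℕ) :
    (triMat a b (n + 2)).det =
      a 0 * (triMat (fun k => a (k + 1)) (fun k => b (k + 1)) (n + 1)).det -
        b 0 * (triMat (fun k => a (k + 2)) (fun k => b (k + 2)) n).det := by
  rw [Matrix.det_succ_column_zero]
  rw [Fin.sum_univ_succ, Fin.sum_univ_succ]
  have h0 : ∀ i : Fin n, triMat a b (n+2) i.succ.succ 0 = 0 := by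
    intro i; simp [triMat, Fin.val_succ]
  simp only [h0, mul_zero, zero_mul, Finset.sum_const_zero, add_zero]
  have e00 : triMat a b (n+2) 0 0 = a 0 := by simp [triMat]
  have e10 : triMat a b (n+2) (Fin.succ 0) 0 = b 0 := by simp [triMat]
  rw [e00, e10]
  have hsub1 : (triMat a b (n + 2)).submatrix (Fin.succAbove 0) Fin.succ
      = triMat (fun k => a (k + 1)) (fun k => b (k + 1)) (n + 1) := by
    ext i j
    simp [triMat, Fin.succAbove_zero, Fin.val_succ]
  rw [hsub1]
  set N := (triMat a b (n + 2)).submatrix (Fin.succ 0).succAbove Fin.succ with hN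
  have hNdet : N.det = (triMat (fun k => a (k + 2)) (fun k => b (k + 2)) n).det := by
    rw [Matrix.det_succ_row_zero, Fin.sum_univ_succ]
    have hrow : ∀ j : Fin n, N 0 j.succ = 0 := by
      intro j
      simp [hN, triMat, Fin.succ_succAbove_zero, Fin.val_succ]
    simp only [hrow, mul_zero, zero_mul, Finset.sum_const_zero, add_zero]
    have e0 : N 0 0 = 1 := by
      simp [hN, triMat, Fin.succ_succAbove_zero]
    rw [e0]
    have hsub2 : N.submatrix Fin.succ (Fin.succAbove 0)
        = triMat (fun k => a (k + 2)) (fun k => b (k + 2)) n := by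
      ext i j
      simp [hN, triMat, Fin.succAbove_zero, Fin.succ_succAbove_succ, Fin.val_succ]
    rw [hsub2]
    simp
  rw [hNdet]
  simp [Fin.val_succ]
  ring

lemma det_triMat_const (s t : ℝ) (n : ℕ) :
    (triMat (fun _ => s) (fun _ => t) n).det = dseq s t n := by
  induction n using Nat.strong_induction_on with
  | _ n ih =>
    match n with
    | 0 => simp [dseq]
    | 1 => simp [triMat, dseq]
    | (n + 2) =>
      rw [triMat_det_rec, ih (n+1) (by omega), ih n (by omega)]
      rfl

variable {p q s t : ℝ}

lemma jacobi_block_pos {k : ℕ} (hk : 1 ≤ k) (n : ℕ) :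
    (Matrix.of fun i j : Fin n => jacobiPQST p q s t (k + i) (k + j)) =
      triMat (fun _ => s) (fun _ => t) n := by
  ext i j
  simp only [Matrix.of_apply, jacobiPQST, triMat]
  split_ifs <;> first | rfl | (exfalso; omega) | exact False.elim (by assumption)

lemma jacobi_block_one (n : ℕ) :
    (Matrix.of fun i j : Fin n => jacobiPQST p q s t ((i : ℕ) + 1) ((j : ℕ) + 1)) =
      triMat (fun _ => s) (fun _ => t) n := by
  ext i j
  simp only [Matrix.of_apply, jacobiPQST, triMat]
  split_ifs <;> first | rfl | (exfalso; omega) | exact False.elim (by assumption)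

lemma jacobi_block_zero (n : ℕ) :
    (Matrix.of fun i j : Fin n => jacobiPQST p q s t i j) =
      triMat (fun i => if i = 0 then p else s) (fun j => if j = 0 then q else t) n := by
  ext i j
  simp only [Matrix.of_apply, jacobiPQST, triMat]
  split_ifs <;> first | rfl | (exfalso; omega) | exact False.elim (by assumption)

lemma det_triMat_zero (n : ℕ) :
    (triMat (fun i => if i = 0 then p else s) (fun j => if j = 0 then q else t) n).det
      = Dseq p q s t n := by
  match n with
  | 0 => simp [Dseq]
  | 1 => simp [triMat, Dseq]
  | (n + 2) =>
      rw [triMat_det_rec]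
      have h1 : (fun k => if k + 1 = 0 then p else s) = fun _ : ℕ => s := by
        funext k; simp
      have h2 : (fun k => if k + 1 = 0 then q else t) = fun _ : ℕ => t := by
        funext k; simp
      have h3 : (fun k => if k + 2 = 0 then p else s) = fun _ : ℕ => s := by
        funext k; simp
      have h4 : (fun k => if k + 2 = 0 then q else t) = fun _ : ℕ => t := by
        funext k; simp
      simp only [h1, h2, h3, h4, det_triMat_const]
      rfl

lemma jacobi_nonneg (hp : 0 ≤ p) (hq : 0 ≤ q) (hs : 0 ≤ s) (ht : 0 ≤ t) (i j : ℕ) :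
    0 ≤ jacobiPQST p q s t i j := by
  simp only [jacobiPQST]
  split_ifs <;> first | assumption | norm_num

lemma jacobi_zero {i j : ℕ} (h : j + 1 < i ∨ i + 1 < j) :
    jacobiPQST p q s t i j = 0 := by
  simp only [jacobiPQST]
  split_ifs <;> first | rfl | (exfalso; omega) | exact False.elim (by assumption)

section AlphaBeta
variable {α β : ℝ}

lemma dseq_step (hsum : α + β = s) (hprod : α * β = t) (n : ℕ) :
    dseq s t (n + 1) = α * dseq s t n + β ^ (n + 1) := by
  induction n with
  | zero => simp [dseq]; linarith
  | succ n ih =>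
    show s * dseq s t (n + 1) - t * dseq s t n = _
    rw [ih, ← hsum, ← hprod]; ring

lemma dseq_nonneg (hβ : 0 ≤ β) (hαβ : β ≤ α) (hsum : α + β = s) (hprod : α * β = t) (n : ℕ) :
    0 ≤ dseq s t n := by
  induction n with
  | zero => norm_num [dseq]
  | succ n ih =>
    rw [dseq_step hsum hprod]
    have : 0 ≤ β ^ (n+1) := pow_nonneg hβ _
    nlinarith

lemma dseq_lower (hβ : 0 ≤ β) (hαβ : β ≤ α) (hsum : α + β = s) (hprod : α * β = t) (n : ℕ) :
    (n + 1 : ℝ) * β ^ n ≤ dseq s t n := by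
  induction n with
  | zero => norm_num [dseq]
  | succ n ih =>
    rw [dseq_step hsum hprod]
    have h1 : (n + 1 : ℝ) * β ^ (n+1) ≤ α * dseq s t n := by
      calc (n + 1 : ℝ) * β ^ (n+1) = β * ((n+1) * β ^ n) := by ring
        _ ≤ β * dseq s t n := by
            apply mul_le_mul_of_nonneg_left ih hβ
        _ ≤ α * dseq s t n := by
            apply mul_le_mul_of_nonneg_right hαβ (dseq_nonneg hβ hαβ hsum hprod n)
    push_cast
    nlinarith
end AlphaBeta

lemma eseq_invariant (c : ℝ) (n : ℕ) :
    eseq c (n+1) ^ 2 - eseq c (n+2) * eseq c n = 1 := by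
  induction n with
  | zero => simp [eseq]; ring
  | succ n ih =>
    show eseq c (n+2) ^ 2 - eseq c (n+3) * eseq c (n+1) = 1
    have h2 : eseq c (n+3) = c * eseq c (n+2) - eseq c (n+1) := rfl
    have h1 : eseq c (n+2) = c * eseq c (n+1) - eseq c n := rfl
    linear_combination ih - eseq c (n+1) * h2 + eseq c (n+2) * h1

lemma eseq_neg {c : ℝ} (hc : c < 2) (h : ∀ n, 0 ≤ eseq c n) : False := by
  have hone : ∀ n, 1 ≤ eseq c n := by
    intro n
    match n with
    | 0 => norm_num [eseq]
    | (n+1) =>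
      have := eseq_invariant c n
      nlinarith [h (n+1), h (n+2), h n]
  set g : ℕ → ℝ := fun n => eseq c (n+1) - eseq c n with hg
  have hgstep : ∀ n, g (n+1) ≤ g n - (2 - c) := by
    intro n
    have h2 : eseq c (n+2) = c * eseq c (n+1) - eseq c n := rfl
    have := hone (n+1)
    simp only [hg]
    nlinarith
  have hgbound : ∀ n : ℕ, g n ≤ g 0 - n * (2 - c) := by
    intro n
    induction n with
    | zero => simp
    | succ n ih =>
      have := hgstep n
      push_cast
      push_cast at ih
      linarith
  obtain ⟨N, hN⟩ := exists_nat_gt ((g 0 + 1) / (2 - c))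
  have hc2 : 0 < 2 - c := by linarith
  have hgN : g N ≤ -1 := by
    have := hgbound N
    rw [div_lt_iff₀ hc2] at hN
    linarith
  have hgle : ∀ k, g (N + k) ≤ -1 := by
    intro k
    induction k with
    | zero => simpa using hgN
    | succ k ih =>
      have h1 : N + (k+1) = (N + k) + 1 := by omega
      rw [h1]
      have := hgstep (N + k)
      linarith
  have hek : ∀ k : ℕ, eseq c (N + 1 + k) ≤ eseq c (N + 1) - k := by
    intro k
    induction k with
    | zero => simp
    | succ k ih =>
      have h1 := hgle (k + 1)
      have h2 : eseq c (N + 1 + (k+1)) = eseq c (N + 1 + k) + g (N + (k + 1)) := by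
        simp only [hg]
        have e1 : N + (k+1) + 1 = N + 1 + (k+1) := by omega
        rw [e1]
        have e2 : N + (k+1) = N + 1 + k := by omega
        rw [e2]
        ring
      push_cast
      push_cast at ih
      linarith
  obtain ⟨K, hK⟩ := exists_nat_gt (eseq c (N + 1))
  have := hek K
  have := h (N + 1 + K)
  linarith

lemma dseq_exists_neg (hs : 0 ≤ s) (hlt : s ^ 2 < 4 * t) :
    ∃ n, dseq s t n < 0 := by
  have ht : 0 < t := by nlinarith
  set u := Real.sqrt t with hu
  have hu0 : 0 < u := Real.sqrt_pos.mpr ht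
  have hu2 : u ^ 2 = t := Real.sq_sqrt ht.le
  set c := s / u with hc
  have hsc : s = c * u := by rw [hc, div_mul_cancel₀ s hu0.ne']
  have hcd : ∀ n, dseq s t n = u ^ n * eseq c n := by
    intro n
    induction n using Nat.strong_induction_on with
    | _ n ih =>
      match n with
      | 0 => simp [dseq, eseq]
      | 1 => simp [dseq, eseq, hsc]; ring
      | (n+2) =>
        show s * dseq s t (n + 1) - t * dseq s t n = _
        rw [ih (n+1) (by omega), ih n (by omega), hsc, ← hu2]
        show _ = u ^ (n+2) * (c * eseq c (n+1) - eseq c n)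
        ring
  have hclt : c < 2 := by
    rw [hc, div_lt_iff₀ hu0]
    nlinarith
  by_contra hcon
  push_neg at hcon
  apply eseq_neg hclt
  intro n
  have h1 := hcon n
  rw [hcd n] at h1
  have := pow_pos hu0 n
  nlinarith [this, h1]

lemma tp_of_nonneg (hp : 0 ≤ p) (hq : 0 ≤ q) (hs : 0 ≤ s) (ht : 0 ≤ t)
    (hd : ∀ n, 0 ≤ dseq s t n) (hD : ∀ n, 0 ≤ Dseq p q s t n) :
    TotallyPositive (jacobiPQST p q s t) := by
  set M := jacobiPQST p q s t with hM
  intro n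
  induction n using Nat.strong_induction_on with
  | _ n ih =>
    intro f g hf hg
    match n, ih with
    | 0, ih => simp [Matrix.det_isEmpty]
    | (m+1), ih =>
      set B := Matrix.of fun i j : Fin (m+1) => M (f i) (g j) with hB
      rcases lt_trichotomy (f 0) (g 0) with hlt | heq | hgt
      · -- row 0 nearly zero
        by_cases hone : g 0 = f 0 + 1
        · rw [Matrix.det_succ_row_zero, Fin.sum_univ_succ]
          have hrow : ∀ j' : Fin m, B 0 j'.succ = 0 := by
            intro j'
            apply jacobi_zero
            right
            have : g 0 < g j'.succ := hg (Fin.succ_pos j')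
            omega
          simp only [hrow, mul_zero, zero_mul, Finset.sum_const_zero, add_zero]
          have hsub : B.submatrix Fin.succ (Fin.succAbove 0)
              = Matrix.of fun i j : Fin m => M ((f ∘ Fin.succ) i) ((g ∘ Fin.succ) j) := by
            ext i j
            simp [hB, Fin.succAbove_zero]
          rw [hsub]
          have h1 := ih m (by omega) (f ∘ Fin.succ) (g ∘ Fin.succ)
            (hf.comp Fin.strictMono_succ) (hg.comp Fin.strictMono_succ)
          have h2 : (0:ℝ) ≤ B 0 0 := jacobi_nonneg hp hq hs ht _ _
          simpa using mul_nonneg h2 h1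
        · rw [Matrix.det_eq_zero_of_row_eq_zero 0]
          intro j'
          apply jacobi_zero
          right
          have : g 0 ≤ g j' := hg.monotone (Fin.zero_le j')
          omega
      · -- f 0 = g 0
        by_cases hall : ∀ i : Fin (m+1), f i = f 0 + i ∧ g i = g 0 + i
        · -- contiguous block
          have hBeq : B = Matrix.of fun i j : Fin (m+1) => M (f 0 + i) (f 0 + j) := by
            ext i j
            simp only [hB, Matrix.of_apply, (hall i).1, (hall j).2, heq]
          rcases Nat.eq_zero_or_pos (f 0) with h0 | h0
          · have : B = Matrix.of fun i j : Fin (m+1) => M i j := by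
              rw [hBeq, h0]; ext i j; simp
            rw [this, hM, jacobi_block_zero, det_triMat_zero]
            exact hD (m+1)
          · rw [hBeq, hM, jacobi_block_pos h0, det_triMat_const]
            exact hd (m+1)
        · -- find least break index
          push_neg at hall
          set S : Finset (Fin (m+1)) :=
            Finset.univ.filter (fun i => ¬(f i = f 0 + i ∧ g i = g 0 + i)) with hS
          have hSne : S.Nonempty := by
            obtain ⟨i, hi⟩ := hall
            refine ⟨i, ?_⟩
            simp only [hS, Finset.mem_filter, Finset.mem_univ, true_and]
            intro hcon
            exact hi hcon.1 hcon.2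
          set j : Fin (m+1) := S.min' hSne with hj
          have hjS : j ∈ S := S.min'_mem hSne
          have hprev : ∀ i : Fin (m+1), i < j → f i = f 0 + i ∧ g i = g 0 + i := by
            intro i hij
            by_contra hc
            have : j ≤ i := S.min'_le i (by
              simp only [hS, Finset.mem_filter, Finset.mem_univ, true_and]
              intro hcon; exact hc hcon)
            exact absurd hij (not_lt.mpr this)
          have hj0 : 0 < (j : ℕ) := by
            rcases Nat.eq_zero_or_pos (j : ℕ) with h0 | h0
            · exfalso
              have hj00 : j = 0 := Fin.ext h0
              rw [hj00] at hjS
              simp only [hS, Finset.mem_filter, Finset.mem_univ, true_and] at hjS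
              exact hjS ⟨by simp, by simp⟩
            · exact h0
          set J : ℕ := (j : ℕ) with hJ
          have hJm : J ≤ m := by omega
          have hjbreak : ¬(f j = f 0 + J ∧ g j = g 0 + J) := by
            simp only [hS, Finset.mem_filter, Finset.mem_univ, true_and] at hjS
            exact hjS
          have hfJ : f 0 + J ≤ f j ∧ g 0 + J ≤ g j := by
            have hi' : (⟨J - 1, by omega⟩ : Fin (m+1)) < j := by
              rw [Fin.lt_def]; simp; omega
            obtain ⟨hfi, hgi⟩ := hprev _ hi'
            have h1 : f ⟨J - 1, by omega⟩ < f j := hf hi'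
            have h2 : g ⟨J - 1, by omega⟩ < g j := hg hi'
            simp only at hfi hgi
            constructor <;> omega
          -- block decomposition
          set l : ℕ := m + 1 - J with hl
          have hkl : J + l = m + 1 := by omega
          set e : Fin J ⊕ Fin l ≃ Fin (m+1) := finSumFinEquiv.trans (finCongr hkl) with he
          have hel : ∀ i : Fin J, ((e (Sum.inl i)) : ℕ) = (i : ℕ) := by
            intro i; simp [he]
          have her : ∀ i : Fin l, ((e (Sum.inr i)) : ℕ) = J + (i : ℕ) := by
            intro i; simp [he]
          have hdet : B.det = (B.submatrix e e).det := (Matrix.det_submatrix_equiv_self e B).symm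
          set f1 : Fin J → ℕ := fun i => f (e (Sum.inl i)) with hf1
          set g1 : Fin J → ℕ := fun i => g (e (Sum.inl i)) with hg1
          set f2 : Fin l → ℕ := fun i => f (e (Sum.inr i)) with hf2
          set g2 : Fin l → ℕ := fun i => g (e (Sum.inr i)) with hg2
          have hf1m : StrictMono f1 := by
            intro a b hab
            exact hf (by rw [Fin.lt_def, hel, hel]; exact hab)
          have hg1m : StrictMono g1 := by
            intro a b hab
            exact hg (by rw [Fin.lt_def, hel, hel]; exact hab)
          have hf2m : StrictMono f2 := by
            intro a b hab
            exact hf (by rw [Fin.lt_def, her, her]; exact Nat.add_lt_add_left hab J)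
          have hg2m : StrictMono g2 := by
            intro a b hab
            exact hg (by rw [Fin.lt_def, her, her]; exact Nat.add_lt_add_left hab J)
          have hA1 := ih J (by omega) f1 g1 hf1m hg1m
          have hA4 := ih l (by omega) f2 g2 hf2m hg2m
          -- facts for zero blocks
          have hg1le : ∀ i : Fin J, g1 i = g 0 + (i : ℕ) := by
            intro i
            have hlt' : e (Sum.inl i) < j := by rw [Fin.lt_def, hel]; omega
            have h := (hprev _ hlt').2
            show g (e (Sum.inl i)) = g 0 + (i : ℕ)
            rw [h, hel]
          have hf1le : ∀ i : Fin J, f1 i = f 0 + (i : ℕ) := by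
            intro i
            have hlt' : e (Sum.inl i) < j := by rw [Fin.lt_def, hel]; omega
            have h := (hprev _ hlt').1
            show f (e (Sum.inl i)) = f 0 + (i : ℕ)
            rw [h, hel]
          have hf2ge : ∀ i : Fin l, f j ≤ f2 i := by
            intro i
            apply hf.monotone
            rw [Fin.le_def, her]; omega
          have hg2ge : ∀ i : Fin l, g j ≤ g2 i := by
            intro i
            apply hg.monotone
            rw [Fin.le_def, her]; omega
          have hbreak : f 0 + J < f j ∨ g 0 + J < g j := by
            rcases Nat.lt_or_ge (f 0 + J) (f j) with h | h
            · exact Or.inl h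
            · right
              have hfj : f j = f 0 + J := le_antisymm h hfJ.1
              rcases Nat.lt_or_ge (g 0 + J) (g j) with h' | h'
              · exact h'
              · exact absurd ⟨hfj, le_antisymm h' hfJ.2⟩ hjbreak
          rcases hbreak with hbf | hbg
          · -- zeros in lower-left block
            have hblocks : B.submatrix e e = Matrix.fromBlocks
                (Matrix.of fun i j' => M (f1 i) (g1 j'))
                (Matrix.of fun i j' => M (f1 i) (g2 j')) 0
                (Matrix.of fun i j' => M (f2 i) (g2 j')) := by
              ext i j'
              rcases i with i | i <;> rcases j' with j' | j' <;>
                simp only [Matrix.submatrix_apply, Matrix.fromBlocks_apply₁₁,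
                  Matrix.fromBlocks_apply₁₂, Matrix.fromBlocks_apply₂₁,
                  Matrix.fromBlocks_apply₂₂, Matrix.of_apply, hB, Matrix.zero_apply, hf1, hg1, hf2, hg2]
              apply jacobi_zero
              left
              have h1 : g (e (Sum.inl j')) = g 0 + (j' : ℕ) := hg1le j'
              have h2 : f j ≤ f (e (Sum.inr i)) := hf2ge i
              have h3 : (j' : ℕ) < J := j'.isLt
              omega
            rw [hdet, hblocks, Matrix.det_fromBlocks_zero₂₁]
            exact mul_nonneg hA1 hA4
          · -- zeros in upper-right block
            have hblocks : B.submatrix e e = Matrix.fromBlocks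
                (Matrix.of fun i j' => M (f1 i) (g1 j')) 0
                (Matrix.of fun i j' => M (f2 i) (g1 j'))
                (Matrix.of fun i j' => M (f2 i) (g2 j')) := by
              ext i j'
              rcases i with i | i <;> rcases j' with j' | j' <;>
                simp only [Matrix.submatrix_apply, Matrix.fromBlocks_apply₁₁,
                  Matrix.fromBlocks_apply₁₂, Matrix.fromBlocks_apply₂₁,
                  Matrix.fromBlocks_apply₂₂, Matrix.of_apply, hB, Matrix.zero_apply, hf1, hg1, hf2, hg2]
              apply jacobi_zero
              right
              have h1 : f (e (Sum.inl i)) = f 0 + (i : ℕ) := hf1le i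
              have h2 : g j ≤ g (e (Sum.inr j')) := hg2ge j'
              have h3 : (i : ℕ) < J := i.isLt
              omega
            rw [hdet, hblocks, Matrix.det_fromBlocks_zero₁₂]
            exact mul_nonneg hA1 hA4
      · -- column 0 nearly zero
        by_cases hone : f 0 = g 0 + 1
        · rw [Matrix.det_succ_column_zero, Fin.sum_univ_succ]
          have hcol : ∀ i' : Fin m, B i'.succ 0 = 0 := by
            intro i'
            apply jacobi_zero
            left
            have : f 0 < f i'.succ := hf (Fin.succ_pos i')
            omega
          simp only [hcol, mul_zero, zero_mul, Finset.sum_const_zero, add_zero]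
          have hsub : B.submatrix (Fin.succAbove 0) Fin.succ
              = Matrix.of fun i j : Fin m => M ((f ∘ Fin.succ) i) ((g ∘ Fin.succ) j) := by
            ext i j
            simp [hB, Fin.succAbove_zero]
          rw [hsub]
          have h1 := ih m (by omega) (f ∘ Fin.succ) (g ∘ Fin.succ)
            (hf.comp Fin.strictMono_succ) (hg.comp Fin.strictMono_succ)
          have h2 : (0:ℝ) ≤ B 0 0 := jacobi_nonneg hp hq hs ht _ _
          simpa using mul_nonneg h2 h1
        · rw [Matrix.det_eq_zero_of_column_eq_zero 0]
          intro i'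
          apply jacobi_zero
          left
          have : f 0 ≤ f i' := hf.monotone (Fin.zero_le i')
          omega

end StmtNine

open StmtNine in
theorem stmt_9 (p q s t : ℝ) (hp : 0 ≤ p) (hq : 0 ≤ q) (hs : 0 ≤ s) (ht : 0 ≤ t) :
    TotallyPositive (jacobiPQST p q s t) ↔
      4 * t ≤ s ^ 2 ∧ q ≤ p * (s + Real.sqrt (s ^ 2 - 4 * t)) / 2 := by
  constructor
  · intro hTP
    -- the Toeplitz minors are nonnegative
    have hd : ∀ n, 0 ≤ dseq s t n := by
      intro n
      have hmono : StrictMono (fun i : Fin n => (i : ℕ) + 1) := by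
        intro a b hab
        simpa using (Fin.lt_def.mp hab)
      have h := hTP n (fun i => (i : ℕ) + 1) (fun i => (i : ℕ) + 1) hmono hmono
      have h' : 0 ≤ (Matrix.of fun i j : Fin n =>
          jacobiPQST p q s t ((i : ℕ) + 1) ((j : ℕ) + 1)).det := h
      rwa [jacobi_block_one, det_triMat_const] at h'
    have hD : ∀ n, 0 ≤ Dseq p q s t n := by
      intro n
      have hmono : StrictMono (fun i : Fin n => (i : ℕ)) := fun _ _ h => h
      have h := hTP n (fun i => (i : ℕ)) (fun i => (i : ℕ)) hmono hmono
      have h' : 0 ≤ (Matrix.of fun i j : Fin n => jacobiPQST p q s t i j).det := h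
      rwa [jacobi_block_zero, det_triMat_zero] at h'
    have h4t : 4 * t ≤ s ^ 2 := by
      by_contra hcon
      push_neg at hcon
      obtain ⟨n, hn⟩ := dseq_exists_neg hs (by linarith)
      exact absurd (hd n) (not_le.mpr hn)
    refine ⟨h4t, ?_⟩
    have hnn : 0 ≤ s ^ 2 - 4 * t := by linarith
    set r := Real.sqrt (s ^ 2 - 4 * t) with hr
    have hr0 : 0 ≤ r := Real.sqrt_nonneg _
    have hr2 : r ^ 2 = s ^ 2 - 4 * t := Real.sq_sqrt hnn
    have hrs : r ≤ s := by
      rw [hr]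
      calc Real.sqrt (s ^ 2 - 4 * t) ≤ Real.sqrt (s ^ 2) :=
            Real.sqrt_le_sqrt (by linarith)
        _ = s := Real.sqrt_sq hs
    set α := (s + r) / 2 with hα
    set β := (s - r) / 2 with hβ
    have hsum : α + β = s := by rw [hα, hβ]; ring
    have hprod : α * β = t := by
      rw [hα, hβ]; linear_combination (-(1:ℝ)/4) * hr2
    have hβ0 : 0 ≤ β := by rw [hβ]; linarith
    have hαβ : β ≤ α := by rw [hα, hβ]; linarith
    by_contra hcon
    push_neg at hcon
    have hqα : p * α < q := by
      have : p * α = p * (s + r) / 2 := by rw [hα]; ring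
      linarith [this ▸ hcon]
    have key : ∀ n, (q - p * α) * dseq s t n ≤ p * β ^ (n + 1) := by
      intro n
      have h1 : 0 ≤ p * dseq s t (n + 1) - q * dseq s t n := hD (n + 2)
      have h2 := dseq_step (s := s) (t := t) hsum hprod n
      rw [h2] at h1
      nlinarith [h1]
    rcases eq_or_lt_of_le hβ0 with hβz | hβz
    · have k0 := key 0
      rw [show dseq s t 0 = 1 from rfl, pow_one, ← hβz] at k0
      simp at k0
      linarith
    · obtain ⟨N, hN⟩ := exists_nat_gt (p * β / (q - p * α))
      have hlow := dseq_lower (s := s) (t := t) hβ0 hαβ hsum hprod N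
      have hk := key N
      have hβN : 0 < β ^ N := pow_pos hβz N
      have hδ : 0 < q - p * α := by linarith
      have h1 : ((q - p * α) * ((N : ℝ) + 1)) * β ^ N ≤ (p * β) * β ^ N := by
        calc ((q - p * α) * ((N : ℝ) + 1)) * β ^ N
            = (q - p * α) * (((N : ℝ) + 1) * β ^ N) := by ring
          _ ≤ (q - p * α) * dseq s t N := mul_le_mul_of_nonneg_left hlow hδ.le
          _ ≤ p * β ^ (N + 1) := hk
          _ = (p * β) * β ^ N := by ring
      have h2 : (q - p * α) * ((N : ℝ) + 1) ≤ p * β := le_of_mul_le_mul_right h1 hβN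
      rw [div_lt_iff₀ hδ] at hN
      nlinarith [h2]
  · rintro ⟨h4t, hqle⟩
    have hnn : 0 ≤ s ^ 2 - 4 * t := by linarith
    set r := Real.sqrt (s ^ 2 - 4 * t) with hr
    have hr0 : 0 ≤ r := Real.sqrt_nonneg _
    have hr2 : r ^ 2 = s ^ 2 - 4 * t := Real.sq_sqrt hnn
    have hrs : r ≤ s := by
      rw [hr]
      calc Real.sqrt (s ^ 2 - 4 * t) ≤ Real.sqrt (s ^ 2) :=
            Real.sqrt_le_sqrt (by linarith)
        _ = s := Real.sqrt_sq hs
    set α := (s + r) / 2 with hα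
    set β := (s - r) / 2 with hβ
    have hsum : α + β = s := by rw [hα, hβ]; ring
    have hprod : α * β = t := by
      rw [hα, hβ]; linear_combination (-(1:ℝ)/4) * hr2
    have hβ0 : 0 ≤ β := by rw [hβ]; linarith
    have hαβ : β ≤ α := by rw [hα, hβ]; linarith
    have hqα : q ≤ p * α := by
      have : p * α = p * (s + r) / 2 := by rw [hα]; ring
      linarith [this ▸ hqle]
    have hd : ∀ n, 0 ≤ dseq s t n := dseq_nonneg hβ0 hαβ hsum hprod
    have hD : ∀ n, 0 ≤ Dseq p q s t n := by
      intro n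
      match n with
      | 0 => norm_num [Dseq]
      | 1 => simpa [Dseq] using hp
      | (n + 2) =>
        show 0 ≤ p * dseq s t (n + 1) - q * dseq s t n
        rw [dseq_step (s := s) (t := t) hsum hprod n]
        nlinarith [mul_nonneg (by linarith : (0:ℝ) ≤ p * α - q) (hd n),
          mul_nonneg hp (pow_nonneg hβ0 (n + 1))]
    exact tp_of_nonneg hp hq hs ht hd hD
end

section
/- The central binomial coefficients binom(2n, n) are the Catalan-like numbers for σ = (2,2,2,...) and τ = (2,1,1,1,...): if r_{0,0} = 1, and r_{n+1,k} = r_{n,k−1} + 2 r_{n,k} + t_{k+1} r_{n,k+1} with t_1 = 2 and t_k = 1 for k ≥ 2, then r_{n,0} = binom(2n, n) for all n. -/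
lemma chooseA (m e : ℕ) : (m+2).choose (e+2)
    = m.choose e + 2 * m.choose (e+1) + m.choose (e+2) := by
  simp [Nat.choose_succ_succ]
  ring

lemma chooseB (m : ℕ) : (2*(m+1)+2).choose (m+2)
    = 2 * ((2*(m+1)).choose (m+1)) + 2 * ((2*(m+1)).choose m) := by
  have h1 : (2*(m+1)+2).choose (m+2)
      = (2*(m+1)).choose m + 2 * (2*(m+1)).choose (m+1) + (2*(m+1)).choose (m+2) :=
    chooseA _ _
  have h2 : (2*(m+1)).choose (m+2) = (2*(m+1)).choose m := by
    have := Nat.choose_symm (n := 2*(m+1)) (k := m+2) (by omega)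
    have hm : 2*(m+1) - (m+2) = m := by omega
    rw [hm] at this
    omega
  omega

theorem stmt_14 (r : ℕ → ℕ → ℝ) (t : ℕ → ℝ)
    (ht1 : t 1 = 2) (htk : ∀ k, 2 ≤ k → t k = 1)
    (h00 : r 0 0 = 1)
    (hz : ∀ n k : ℕ, n < k → r n k = 0)
    (hrec0 : ∀ n : ℕ, r (n + 1) 0 = 2 * r n 0 + t 1 * r n 1)
    (hrec : ∀ n k : ℕ, r (n + 1) (k + 1) =
      r n k + 2 * r n (k + 1) + t (k + 2) * r n (k + 2)) :
    ∀ n : ℕ, r n 0 = (Nat.choose (2 * n) n : ℝ) := by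
  have key : ∀ n k : ℕ, r n k = if k ≤ n then ((2*n).choose (n-k) : ℝ) else 0 := by
    intro n
    induction n with
    | zero =>
      intro k
      cases k with
      | zero => simpa using h00
      | succ k => simp [hz 0 (k+1) (by omega)]
    | succ n ih =>
      intro k
      cases k with
      | zero =>
        rw [hrec0, ht1, ih 0, ih 1]
        cases n with
        | zero => norm_num
        | succ m =>
          simp only [Nat.le_refl, if_true, show (1:ℕ) ≤ m+1 by omega, if_true,
            show (0:ℕ) ≤ m+1 by omega]
          rw [show m+1-0 = m+1 by omega, show m+1-1 = m by omega,
            show m+1+1-0 = m+2 by omega, show 2*(m+1+1) = 2*(m+1)+2 by ring]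
          rw [chooseB m]
          push_cast
          ring
      | succ k =>
        by_cases hk : k + 1 ≤ n + 1
        · obtain ⟨d, rfl⟩ : ∃ d, n = k + d := ⟨n - k, by omega⟩
          rw [hrec, htk (k+2) (by omega), ih k, ih (k+1), ih (k+2)]
          match d with
          | 0 =>
            simp only [Nat.le_refl, if_true, if_neg (by omega : ¬ k+1 ≤ k+0),
              if_neg (by omega : ¬ k+2 ≤ k+0), if_pos (by omega : k+1 ≤ k+0+1)]
            rw [show k+0-k = 0 by omega, show k+0+1-(k+1) = 0 by omega]
            simp
          | 1 =>
            simp only [if_pos (by omega : k ≤ k+1), if_pos (by omega : k+1 ≤ k+1),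
              if_neg (by omega : ¬ k+2 ≤ k+1), if_pos (by omega : k+1 ≤ k+1+1)]
            rw [show k+1-k = 1 by omega, show k+1-(k+1) = 0 by omega,
              show k+1+1-(k+1) = 1 by omega]
            rw [Nat.choose_one_right, Nat.choose_one_right, Nat.choose_zero_right]
            push_cast
            ring
          | (e+2) =>
            simp only [if_pos (by omega : k ≤ k+(e+2)), if_pos (by omega : k+1 ≤ k+(e+2)),
              if_pos (by omega : k+2 ≤ k+(e+2)), if_pos (by omega : k+1 ≤ k+(e+2)+1)]
            rw [show k+(e+2)-k = e+2 by omega, show k+(e+2)-(k+1) = e+1 by omega,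
              show k+(e+2)-(k+2) = e by omega, show k+(e+2)+1-(k+1) = e+2 by omega,
              show 2*(k+(e+2)+1) = 2*(k+(e+2))+2 by ring]
            rw [chooseA (2*(k+(e+2))) e]
            push_cast
            ring
        · rw [hz (n+1) (k+1) (by omega), if_neg hk]
  intro n
  rw [key n 0, if_pos (by omega), Nat.sub_zero]
end

section
/- For the Catalan numbers C_n, the Hankel determinants satisfy det[C_{i+j}]_{0≤i,j≤n} = 1 and det[C_{i+j+1}]_{0≤i,j≤n} = 1 for every n ≥ 0; hence (C_n) is a Stieltjes moment sequence. -/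
open Real MeasureTheory intervalIntegral Nat

open Finset Matrix

/-- Number of nonnegative lattice paths of length `2i` from height 0 to height `2k`. -/
def catL : ℕ → ℕ → ℕ
  | 0, 0 => 1
  | 0, _+1 => 0
  | i+1, 0 => catL i 0 + catL i 1
  | i+1, k+1 => catL i k + 2 * catL i (k+1) + catL i (k+2)

@[simp] lemma catL_zero_zero : catL 0 0 = 1 := rfl
@[simp] lemma catL_zero_succ (k : ℕ) : catL 0 (k+1) = 0 := rfl
lemma catL_succ_zero (i : ℕ) : catL (i+1) 0 = catL i 0 + catL i 1 := rfl
lemma catL_succ_succ (i k : ℕ) :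
    catL (i+1) (k+1) = catL i k + 2 * catL i (k+1) + catL i (k+2) := rfl

lemma catL_eq_zero : ∀ i k : ℕ, i < k → catL i k = 0 := by
  intro i
  induction i with
  | zero => intro k hk; cases k with | zero => omega | succ k => simp
  | succ i ih =>
    intro k hk
    cases k with
    | zero => omega
    | succ k =>
      rw [catL_succ_succ, ih k (by omega), ih (k+1) (by omega), ih (k+2) (by omega)]

lemma catL_diag : ∀ i : ℕ, catL i i = 1 := by
  intro i
  induction i with
  | zero => rfl
  | succ i ih =>
    rw [catL_succ_succ, ih, catL_eq_zero i (i+1) (by omega), catL_eq_zero i (i+2) (by omega)]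

lemma catL_half (i j n : ℕ) (hn : 1 ≤ n) (hi : catL i n = 0) :
    ∑ k ∈ range (n+1), catL (i+1) k * catL j k =
      catL i 0 * catL j 0 + catL i 1 * catL j 0 + catL i 0 * catL j 1
      + 2 * ∑ k ∈ range n, catL i (k+1) * catL j (k+1)
      + ∑ k ∈ range n, catL i (k+2) * catL j (k+1)
      + ∑ k ∈ range n, catL i (k+1) * catL j (k+2) := by
  obtain ⟨m, rfl⟩ : ∃ m, n = m + 1 := ⟨n-1, by omega⟩
  have h1 : ∑ k ∈ range (m+1+1), catL (i+1) k * catL j k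
      = ∑ k ∈ range (m+1), catL (i+1) (k+1) * catL j (k+1) + catL (i+1) 0 * catL j 0 :=
    Finset.sum_range_succ' _ _
  have h2 : ∑ k ∈ range (m+1), catL i k * catL j (k+1)
      = ∑ k ∈ range m, catL i (k+1) * catL j (k+2) + catL i 0 * catL j 1 :=
    Finset.sum_range_succ' _ _
  have h3 : ∑ k ∈ range (m+1), catL i (k+1) * catL j (k+2)
      = ∑ k ∈ range m, catL i (k+1) * catL j (k+2) + catL i (m+1) * catL j (m+2) :=
    Finset.sum_range_succ _ _
  rw [hi, Nat.zero_mul, Nat.add_zero] at h3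
  rw [h1]
  simp only [catL_succ_succ, catL_succ_zero, add_mul]
  rw [Finset.sum_add_distrib, Finset.sum_add_distrib, h2, h3, Finset.mul_sum]
  have h4 : ∀ k, 2 * catL i (k+1) * catL j (k+1) = 2 * (catL i (k+1) * catL j (k+1)) := by
    intro k; ring
  simp only [h4]
  ring

lemma catL_exch (i j n : ℕ) (hn : 1 ≤ n) (hi : catL i n = 0) (hj : catL j n = 0) :
    ∑ k ∈ range (n+1), catL (i+1) k * catL j k
      = ∑ k ∈ range (n+1), catL i k * catL (j+1) k := by
  have hc : ∀ (f g : ℕ → ℕ) (s : Finset ℕ), ∑ k ∈ s, f k * g k = ∑ k ∈ s, g k * f k := by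
    intro f g s; exact Finset.sum_congr rfl fun k _ => Nat.mul_comm _ _
  rw [catL_half i j n hn hi, hc (fun k => catL i k) (fun k => catL (j+1) k),
    catL_half j i n hn hj, hc (fun k => catL j (k+1)) (fun k => catL i (k+1)),
    hc (fun k => catL j (k+2)) (fun k => catL i (k+1)),
    hc (fun k => catL j (k+1)) (fun k => catL i (k+2))]
  ring

lemma catL_main : ∀ i j n : ℕ, i + j + 1 ≤ n → ∑ k ∈ range (n+1), catL i k * catL j k
    = catL (i+j) 0 := by
  intro i
  induction i with
  | zero =>
    intro j n _
    rw [Finset.sum_range_succ' (fun k => catL 0 k * catL j k) n]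
    simp
  | succ i ih =>
    intro j n hn
    rw [catL_exch i j n (by omega) (catL_eq_zero i n (by omega)) (catL_eq_zero j n (by omega)),
      ih (j+1) n (by omega)]
    congr 1
    omega


lemma catL_closed : ∀ i k : ℕ, (catL i k : ℤ)
    = (2*i).choose (i+k) - (2*i).choose (i+k+1) := by
  intro i
  induction i with
  | zero =>
    intro k
    cases k with
    | zero => simp
    | succ k => simp [Nat.choose_eq_zero_of_lt]
  | succ i ih =>
    intro k
    have e1 : 2 * (i+1) = (2*i+1) + 1 := by ring
    have q : ∀ m : ℕ, ((2*(i+1)).choose (m+2) : ℤ)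
        = (2*i).choose m + 2*(2*i).choose (m+1) + (2*i).choose (m+2) := by
      intro m
      rw [e1, Nat.choose_succ_succ (2*i+1) (m+1), Nat.choose_succ_succ (2*i) m,
        Nat.choose_succ_succ (2*i) (m+1)]
      push_cast; ring
    have q0 : ((2*(i+1)).choose (i+1) : ℤ) = 2*(2*i).choose i + 2*(2*i).choose (i+1) := by
      rw [e1, Nat.choose_succ_succ (2*i+1) i, ← Nat.choose_symm_half i,
        Nat.choose_succ_succ (2*i) i]
      push_cast; ring
    cases k with
    | zero =>
      rw [catL_succ_zero]
      push_cast [ih 0, ih 1]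
      rw [show i + 1 + 0 = i + 1 from rfl, show i + 1 + 0 + 1 = i + 2 from rfl,
        show (2:ℕ)*(i+1) = 2*(i+1) from rfl, q0, q i,
        show i + 0 = i from rfl, show i + 0 + 1 = i + 1 from rfl,
        show i + 1 + 1 = i + 2 from rfl]
      ring
    | succ k =>
      rw [catL_succ_succ]
      push_cast [ih k, ih (k+1), ih (k+2)]
      rw [show i + 1 + (k+1) = (i+k) + 2 by ring, show (i+k)+2+1 = (i+k+1)+2 by ring,
        q (i+k), q (i+k+1),
        show i + (k+1) = i+k+1 by ring, show i+k+1+1 = i+k+2 by ring,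
        show i + (k+2) = i+k+2 by ring, show i+k+2+1 = i+k+3 by ring,
        show i+k+1+2 = i+k+3 by ring]
      ring

lemma catL_catalan (m : ℕ) : catL m 0 = catalan m := by
  have key : ((m:ℤ) + 1) * catL m 0 = ((m:ℤ)+1) * catalan m := by
    rw [catL_closed m 0]
    simp only [Nat.add_zero]
    have h1 : (2*m).choose (m+1) * (m+1) = (2*m).choose m * (2*m - m) :=
      Nat.choose_succ_right_eq (2*m) m
    rw [show 2*m - m = m by omega] at h1
    have h3 : (m+1) * catalan m = (2*m).choose m := succ_mul_catalan_eq_centralBinom m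
    have h1' : ((2*m).choose (m+1) : ℤ) * (m+1) = (2*m).choose m * m := by exact_mod_cast h1
    have h3' : ((m:ℤ)+1) * catalan m = (2*m).choose m := by exact_mod_cast h3
    rw [h3']
    linarith [h1']
  have := mul_left_cancel₀ (by positivity : ((m:ℤ)+1) ≠ 0) key
  exact_mod_cast this

/-- Paths of length `2i+1` from 0 to `2k+1`. -/
def catM (i k : ℕ) : ℕ := catL i k + catL i (k+1)

lemma catM_eq_zero (i k : ℕ) (h : i < k) : catM i k = 0 := by
  unfold catM
  rw [catL_eq_zero i k h, catL_eq_zero i (k+1) (by omega)]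

lemma catM_diag (i : ℕ) : catM i i = 1 := by
  unfold catM
  rw [catL_diag, catL_eq_zero i (i+1) (by omega)]

lemma catM_succ_zero (i : ℕ) : catM (i+1) 0 = 2 * catM i 0 + catM i 1 := by
  unfold catM
  rw [catL_succ_zero, catL_succ_succ]
  ring

lemma catM_succ_succ (i k : ℕ) :
    catM (i+1) (k+1) = catM i k + 2 * catM i (k+1) + catM i (k+2) := by
  unfold catM
  rw [catL_succ_succ, catL_succ_succ]
  ring

lemma catM_half (i j n : ℕ) (hn : 1 ≤ n) (hi : catM i n = 0) :
    ∑ k ∈ range (n+1), catM (i+1) k * catM j k =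
      2 * (catM i 0 * catM j 0) + catM i 1 * catM j 0 + catM i 0 * catM j 1
      + 2 * ∑ k ∈ range n, catM i (k+1) * catM j (k+1)
      + ∑ k ∈ range n, catM i (k+2) * catM j (k+1)
      + ∑ k ∈ range n, catM i (k+1) * catM j (k+2) := by
  obtain ⟨m, rfl⟩ : ∃ m, n = m + 1 := ⟨n-1, by omega⟩
  have h1 : ∑ k ∈ range (m+1+1), catM (i+1) k * catM j k
      = ∑ k ∈ range (m+1), catM (i+1) (k+1) * catM j (k+1) + catM (i+1) 0 * catM j 0 :=
    Finset.sum_range_succ' _ _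
  have h2 : ∑ k ∈ range (m+1), catM i k * catM j (k+1)
      = ∑ k ∈ range m, catM i (k+1) * catM j (k+2) + catM i 0 * catM j 1 :=
    Finset.sum_range_succ' _ _
  have h3 : ∑ k ∈ range (m+1), catM i (k+1) * catM j (k+2)
      = ∑ k ∈ range m, catM i (k+1) * catM j (k+2) + catM i (m+1) * catM j (m+2) :=
    Finset.sum_range_succ _ _
  rw [hi, Nat.zero_mul, Nat.add_zero] at h3
  rw [h1]
  simp only [catM_succ_succ, catM_succ_zero, add_mul]
  rw [Finset.sum_add_distrib, Finset.sum_add_distrib, h2, h3, Finset.mul_sum]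
  have h4 : ∀ k, 2 * catM i (k+1) * catM j (k+1) = 2 * (catM i (k+1) * catM j (k+1)) := by
    intro k; ring
  simp only [h4]
  ring

lemma catM_exch (i j n : ℕ) (hn : 1 ≤ n) (hi : catM i n = 0) (hj : catM j n = 0) :
    ∑ k ∈ range (n+1), catM (i+1) k * catM j k
      = ∑ k ∈ range (n+1), catM i k * catM (j+1) k := by
  have hc : ∀ (f g : ℕ → ℕ) (s : Finset ℕ), ∑ k ∈ s, f k * g k = ∑ k ∈ s, g k * f k := by
    intro f g s; exact Finset.sum_congr rfl fun k _ => Nat.mul_comm _ _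
  rw [catM_half i j n hn hi, hc (fun k => catM i k) (fun k => catM (j+1) k),
    catM_half j i n hn hj, hc (fun k => catM j (k+1)) (fun k => catM i (k+1)),
    hc (fun k => catM j (k+2)) (fun k => catM i (k+1)),
    hc (fun k => catM j (k+1)) (fun k => catM i (k+2))]
  ring

lemma catM_main : ∀ i j n : ℕ, i + j + 1 ≤ n → ∑ k ∈ range (n+1), catM i k * catM j k
    = catM (i+j) 0 := by
  intro i
  induction i with
  | zero =>
    intro j n _
    rw [Finset.sum_range_succ' (fun k => catM 0 k * catM j k) n]
    have : ∀ k, catM 0 (k+1) = 0 := fun k => catM_eq_zero 0 (k+1) (by omega)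
    simp [this, catM_diag 0]
  | succ i ih =>
    intro j n hn
    rw [catM_exch i j n (by omega) (catM_eq_zero i n (by omega)) (catM_eq_zero j n (by omega)),
      ih (j+1) n (by omega)]
    congr 1
    omega

lemma catM_catalan (m : ℕ) : catM m 0 = catalan (m+1) := by
  rw [← catL_catalan (m+1), catL_succ_zero]
  rfl

lemma sum_to_catalan_L (n i j : ℕ) (hi : i ≤ n) (hj : j ≤ n) :
    ∑ k ∈ range (n+1), catL i k * catL j k = catalan (i+j) := by
  rw [← catL_catalan, ← catL_main i j (2*n+1) (by omega)]
  apply Finset.sum_subset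
  · intro x hx
    simp only [Finset.mem_range] at hx ⊢
    omega
  · intro k hk hk2
    simp only [Finset.mem_range] at hk hk2
    rw [catL_eq_zero i k (by omega), Nat.zero_mul]

lemma sum_to_catalan_M (n i j : ℕ) (hi : i ≤ n) (hj : j ≤ n) :
    ∑ k ∈ range (n+1), catM i k * catM j k = catalan (i+j+1) := by
  rw [← catM_catalan, ← catM_main i j (2*n+1) (by omega)]
  apply Finset.sum_subset
  · intro x hx
    simp only [Finset.mem_range] at hx ⊢
    omega
  · intro k hk hk2
    simp only [Finset.mem_range] at hk hk2
    rw [catM_eq_zero i k (by omega), Nat.zero_mul]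

lemma det_gram (n : ℕ) (f : ℕ → ℕ → ℕ) (hdiag : ∀ i, f i i = 1)
    (hzero : ∀ i k, i < k → f i k = 0)
    (hsum : ∀ i j, i ≤ n → j ≤ n →
      ∑ k ∈ range (n+1), f i k * f j k = catalan (i+j)) :
    (Matrix.of fun i j : Fin (n+1) => (catalan ((i:ℕ)+(j:ℕ)) : ℤ)).det = 1 := by
  set A : Matrix (Fin (n+1)) (Fin (n+1)) ℤ := Matrix.of fun i k => (f i k : ℤ) with hA
  have hH : (Matrix.of fun i j : Fin (n+1) => (catalan ((i:ℕ)+(j:ℕ)) : ℤ)) = A * Aᵀ := by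
    ext i j
    simp only [Matrix.mul_apply, Matrix.transpose_apply, hA, Matrix.of_apply]
    have : ∀ k : Fin (n+1), (f i k : ℤ) * (f j k : ℤ) = ((f i k * f j k : ℕ) : ℤ) := by
      intro k; push_cast; ring
    rw [Finset.sum_congr rfl fun k _ => this k,
      Fin.sum_univ_eq_sum_range (fun m => ((f i m * f j m : ℕ) : ℤ)) (n+1),
      ← Nat.cast_sum, hsum i j (Fin.is_le i) (Fin.is_le j)]
  have hAdet : A.det = 1 := by
    have htri : A.BlockTriangular OrderDual.toDual := by
      intro i j hij
      have : (i : ℕ) < (j : ℕ) := hij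
      simp [hA, hzero i j this]
    rw [Matrix.det_of_lowerTriangular A htri]
    simp [hA, hdiag]
  rw [hH, Matrix.det_mul, Matrix.det_transpose, hAdet]
  norm_num

lemma det_even_int (n : ℕ) :
    (Matrix.of fun i j : Fin (n+1) => (catalan ((i:ℕ)+(j:ℕ)) : ℤ)).det = 1 :=
  det_gram n catL catL_diag catL_eq_zero (fun i j hi hj => sum_to_catalan_L n i j hi hj)

lemma det_gram' (n : ℕ) (f : ℕ → ℕ → ℕ) (hdiag : ∀ i, f i i = 1)
    (hzero : ∀ i k, i < k → f i k = 0)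
    (hsum : ∀ i j, i ≤ n → j ≤ n →
      ∑ k ∈ range (n+1), f i k * f j k = catalan (i+j+1)) :
    (Matrix.of fun i j : Fin (n+1) => (catalan ((i:ℕ)+(j:ℕ)+1) : ℤ)).det = 1 := by
  set A : Matrix (Fin (n+1)) (Fin (n+1)) ℤ := Matrix.of fun i k => (f i k : ℤ) with hA
  have hH : (Matrix.of fun i j : Fin (n+1) => (catalan ((i:ℕ)+(j:ℕ)+1) : ℤ)) = A * Aᵀ := by
    ext i j
    simp only [Matrix.mul_apply, Matrix.transpose_apply, hA, Matrix.of_apply]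
    have : ∀ k : Fin (n+1), (f i k : ℤ) * (f j k : ℤ) = ((f i k * f j k : ℕ) : ℤ) := by
      intro k; push_cast; ring
    rw [Finset.sum_congr rfl fun k _ => this k,
      Fin.sum_univ_eq_sum_range (fun m => ((f i m * f j m : ℕ) : ℤ)) (n+1),
      ← Nat.cast_sum, hsum i j (Fin.is_le i) (Fin.is_le j)]
  have hAdet : A.det = 1 := by
    have htri : A.BlockTriangular OrderDual.toDual := by
      intro i j hij
      have : (i : ℕ) < (j : ℕ) := hij
      simp [hA, hzero i j this]
    rw [Matrix.det_of_lowerTriangular A htri]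
    simp [hA, hdiag]
  rw [hH, Matrix.det_mul, Matrix.det_transpose, hAdet]
  norm_num

lemma det_odd_int (n : ℕ) :
    (Matrix.of fun i j : Fin (n+1) => (catalan ((i:ℕ)+(j:ℕ)+1) : ℤ)).det = 1 :=
  det_gram' n catM catM_diag catM_eq_zero (fun i j hi hj => sum_to_catalan_M n i j hi hj)

lemma det_cast (n : ℕ) (g : Fin (n+1) → Fin (n+1) → ℕ)
    (h : (Matrix.of fun i j => (g i j : ℤ)).det = 1) :
    (Matrix.of fun i j => (g i j : ℝ)).det = 1 := by
  have hm : (Matrix.of fun i j => (g i j : ℝ))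
      = (Matrix.of fun i j => (g i j : ℤ)).map (Int.castRingHom ℝ) := by
    ext i j; simp
  rw [hm, ← RingHom.mapMatrix_apply, ← RingHom.map_det, h]
  simp

lemma det_even_real (n : ℕ) :
    (Matrix.of fun i j : Fin (n+1) => (catalan ((i:ℕ)+(j:ℕ)) : ℝ)).det = 1 :=
  det_cast n (fun i j => catalan ((i:ℕ)+(j:ℕ))) (det_even_int n)

lemma det_odd_real (n : ℕ) :
    (Matrix.of fun i j : Fin (n+1) => (catalan ((i:ℕ)+(j:ℕ)+1) : ℝ)).det = 1 :=
  det_cast n (fun i j => catalan ((i:ℕ)+(j:ℕ)+1)) (det_odd_int n)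


lemma wallis_even (n : ℕ) :
    ∫ x in (-(π/2))..(π/2), sin x ^ (2*n) = π * centralBinom n / 4^n := by
  induction n with
  | zero => simp [centralBinom]
  | succ n ih =>
    have step := integral_sin_pow (a := -(π/2)) (b := π/2) (2*n)
    rw [show 2*n+2 = 2*(n+1) by ring] at step
    rw [step, ih]
    simp only [Real.cos_pi_div_two, Real.sin_neg, Real.cos_neg, Real.sin_pi_div_two]
    have hcb : ((n:ℝ) + 1) * centralBinom (n+1) = 2*(2*n+1) * centralBinom n := by
      exact_mod_cast Nat.succ_mul_centralBinom_succ n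
    have h4 : (4:ℝ)^(n+1) = 4 * 4^n := by ring
    have hne : (4:ℝ)^n ≠ 0 := by positivity
    have hn2 : (2*(n:ℝ)+2) ≠ 0 := by positivity
    field_simp
    push_cast
    linear_combination (-2*π*(4:ℝ)^n) * hcb

lemma catalan_real (n : ℕ) :
    (catalan n : ℝ) = 2 * centralBinom n - centralBinom (n+1) / 2 := by
  have hcb : ((n:ℝ) + 1) * centralBinom (n+1) = 2*(2*n+1) * centralBinom n := by
    exact_mod_cast Nat.succ_mul_centralBinom_succ n
  have hct : ((n:ℝ) + 1) * catalan n = centralBinom n := by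
    exact_mod_cast succ_mul_catalan_eq_centralBinom n
  have hn : ((n:ℝ)+1) ≠ 0 := by positivity
  apply mul_left_cancel₀ hn
  rw [hct]
  linarith [hcb, hct]

noncomputable def scDens (t : ℝ) : ℝ := (2*π)⁻¹ * Real.sqrt (4 - t^2)

lemma scDens_cont : Continuous scDens := by
  unfold scDens
  fun_prop

lemma scDens_nonneg (t : ℝ) : 0 ≤ scDens t := by
  unfold scDens
  positivity

lemma scDens_zero {t : ℝ} (h : 4 - t^2 ≤ 0) : scDens t = 0 := by
  unfold scDens
  rw [Real.sqrt_eq_zero_of_nonpos h, mul_zero]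

lemma interval_moment (n : ℕ) :
    ∫ t in (-2:ℝ)..2, (t^2)^n * scDens t = catalan n := by
  have hderiv : ∀ x ∈ Set.uIcc (-(π/2)) (π/2), HasDerivAt (fun θ => 2 * sin θ)
      (2 * cos x) x := fun x _ => (Real.hasDerivAt_sin x).const_mul 2
  have hcont : Continuous fun t : ℝ => (t^2)^n * scDens t := by
    unfold scDens; fun_prop
  have hsub := integral_comp_smul_deriv hderiv (by fun_prop)
    hcont
  have h2 : 2 * sin (-(π/2)) = -2 := by simp
  have h2' : 2 * sin (π/2) = 2 := by simp
  rw [h2, h2'] at hsub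
  rw [← hsub]
  have hinteg : ∀ x ∈ Set.uIcc (-(π/2)) (π/2),
      (2 * cos x) • ((fun t : ℝ => (t^2)^n * scDens t) ∘ (fun θ => 2 * sin θ)) x
      = (2/π) * 4^n * (sin x ^ (2*n) - sin x ^ (2*(n+1))) := by
    intro x hx
    have hx' : x ∈ Set.Icc (-(π/2)) (π/2) := by
      rwa [Set.uIcc_of_le (by linarith [Real.pi_pos])] at hx
    have hcos : 0 ≤ cos x := Real.cos_nonneg_of_mem_Icc hx'
    have hsq : 4 - (2 * sin x)^2 = (2 * cos x)^2 := by
      have := Real.sin_sq_add_cos_sq x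
      nlinarith
    simp only [Function.comp_apply, smul_eq_mul, scDens, hsq]
    rw [Real.sqrt_sq (by linarith)]
    have hc2 : cos x ^ 2 = 1 - sin x ^ 2 := by
      have := Real.sin_sq_add_cos_sq x; linarith
    have hpi : π ≠ 0 := Real.pi_ne_zero
    field_simp
    ring_nf
    rw [hc2]
    ring
  rw [intervalIntegral.integral_congr hinteg]
  have hi1 : IntervalIntegrable (fun x => sin x ^ (2*n)) volume (-(π/2)) (π/2) := by
    apply Continuous.intervalIntegrable; fun_prop
  have hi2 : IntervalIntegrable (fun x => sin x ^ (2*(n+1))) volume (-(π/2)) (π/2) := by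
    apply Continuous.intervalIntegrable; fun_prop
  rw [intervalIntegral.integral_const_mul, intervalIntegral.integral_sub hi1 hi2,
    wallis_even n, wallis_even (n+1), catalan_real n]
  have hpi : π ≠ 0 := Real.pi_ne_zero
  have h4 : (4:ℝ)^n ≠ 0 := by positivity
  field_simp
  ring

noncomputable def catNu : Measure ℝ :=
  volume.withDensity (fun t => ENNReal.ofReal (scDens t))

noncomputable def catMeas : Measure ℝ := catNu.map (fun t : ℝ => t^2)

lemma catMeas_neg : catMeas (Set.Iio 0) = 0 := by
  unfold catMeas
  rw [Measure.map_apply (by fun_prop) measurableSet_Iio]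
  have : (fun t : ℝ => t^2) ⁻¹' (Set.Iio 0) = ∅ := by
    ext t
    simp only [Set.mem_preimage, Set.mem_Iio, Set.mem_empty_iff_false, iff_false, not_lt]
    positivity
  rw [this, measure_empty]

lemma catMeas_moment (n : ℕ) : ∫ x, x^n ∂catMeas = catalan n := by
  unfold catMeas
  rw [MeasureTheory.integral_map (by fun_prop) (by fun_prop)]
  unfold catNu
  have hmeas : Measurable (fun t => (scDens t).toNNReal) :=
    scDens_cont.measurable.real_toNNReal
  rw [show (fun t => ENNReal.ofReal (scDens t)) = (fun t => ((scDens t).toNNReal : ENNReal))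
      from rfl,
    integral_withDensity_eq_integral_smul hmeas]
  have hint : ∀ t : ℝ, (scDens t).toNNReal • ((t^2)^n) = (t^2)^n * scDens t := by
    intro t
    rw [NNReal.smul_def, Real.coe_toNNReal _ (scDens_nonneg t), smul_eq_mul, mul_comm]
  simp only [hint]
  have hzero : ∀ t : ℝ, t ∉ Set.Ioc (-2:ℝ) 2 → (t^2)^n * scDens t = 0 := by
    intro t ht
    simp only [Set.mem_Ioc, not_and_or, not_lt, not_le] at ht
    have : scDens t = 0 := by
      apply scDens_zero
      rcases ht with h | h <;> nlinarith
    rw [this, mul_zero]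
  rw [← MeasureTheory.setIntegral_eq_integral_of_forall_compl_eq_zero hzero,
    ← intervalIntegral.integral_of_le (by norm_num : (-2:ℝ) ≤ 2), interval_moment n]


theorem stmt_17 :
    (∀ n : ℕ, Matrix.det (Matrix.of fun i j : Fin (n + 1) =>
        (catalan (i + j : ℕ) : ℝ)) = 1) ∧
    (∀ n : ℕ, Matrix.det (Matrix.of fun i j : Fin (n + 1) =>
        (catalan (i + j + 1 : ℕ) : ℝ)) = 1) ∧
    ∃ μ : MeasureTheory.Measure ℝ, μ (Set.Iio 0) = 0 ∧
      ∀ n : ℕ, (catalan n : ℝ) = ∫ x, x ^ n ∂μ :=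
  ⟨fun n => det_even_real n, fun n => det_odd_real n,
    catMeas, catMeas_neg, fun n => (catMeas_moment n).symm⟩
end
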